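/- arXiv:1302.4599 — 3 statements merged into one kernel-verified Lean document; each statement's English description precedes it below -/
import Mathlib

section
/- Let (X,d,p) be a pointed metric space with p an accumulation point of X, and let E = S_p(X) = {d(x,p) : x ∈ X}. The following three conditions are equivalent: (i) the family Ω_p^X(n) is uniformly bounded; (ii) the family Ω_p^X(n) is uniformly discrete; (iii) E is completely strongly porous at 0. Moreover, if Ω_p^X(n) is uniformly bounded, then R*(Ω_p^X(n)) = M(L̃) and R_*(Ω_p^X(n)) = 1/M(L̃) for every universal element L̃ of Ĩ_Eᵈ. -/
open Filter Topology Set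
open scoped ENNReal

/-- A scaling sequence: strictly positive reals tending to zero. -/
def IsScaling (r : ℕ → ℝ) : Prop := (∀ n, 0 < r n) ∧ Tendsto r atTop (𝓝 0)

/-- A sequence of reals is almost decreasing if it is eventually nonincreasing. -/
def AlmostDecreasing (t : ℕ → ℝ) : Prop := ∀ᶠ n in atTop, t (n + 1) ≤ t n

/-- `τ ∈ Ẽ₀ᵈ`: almost decreasing, values in `E \ {0}`, tending to `0`. -/
def MemE0d (E : Set ℝ) (t : ℕ → ℝ) : Prop :=
  AlmostDecreasing t ∧ (∀ n, t n ∈ E \ {0}) ∧ Tendsto t atTop (𝓝 0)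

/-- `(a,b)` is a connected component of `Int(ℝ⁺ \ E)`: an open interval in `ℝ⁺`
missing `E` that is maximal (among such intervals) with this property. -/
def IsGapComponent (E : Set ℝ) (a b : ℝ) : Prop :=
  0 ≤ a ∧ a < b ∧ Ioo a b ∩ E = ∅ ∧
    ∀ a' b' : ℝ, 0 ≤ a' → a' ≤ a → b ≤ b' → Ioo a' b' ∩ E = ∅ → a' = a ∧ b' = b

/-- `((aₙ,bₙ))ₙ ∈ Ĩ_Eᵈ`. -/
def MemIE (E : Set ℝ) (a b : ℕ → ℝ) : Prop :=
  (∀ n, IsGapComponent E (a n) (b n)) ∧ AlmostDecreasing a ∧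
    Tendsto a atTop (𝓝 0) ∧ Tendsto (fun n => (b n - a n) / b n) atTop (𝓝 1)

/-- `x̃ ≍ ỹ`: there are `c₁, c₂ > 0` with `c₁ xₙ < yₙ < c₂ xₙ` for all `n`. -/
def Asymp (x y : ℕ → ℝ) : Prop :=
  ∃ c₁ c₂ : ℝ, 0 < c₁ ∧ 0 < c₂ ∧ ∀ n, c₁ * x n < y n ∧ y n < c₂ * x n

/-- `E` is `τ̃`-strongly porous at `0`. -/
def TauStronglyPorous (E : Set ℝ) (t : ℕ → ℝ) : Prop :=
  ∃ a b : ℕ → ℝ, MemIE E a b ∧ Asymp t a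

/-- `E` is completely strongly porous at `0`. -/
def CSP (E : Set ℝ) : Prop := ∀ t : ℕ → ℝ, MemE0d E t → TauStronglyPorous E t

/-- `L̃ = ((lₙ,mₙ)) ∈ Ĩ_Eᵈ` is universal. -/
def IsUniversal (E : Set ℝ) (l m : ℕ → ℝ) : Prop :=
  MemIE E l m ∧ ∀ a b : ℕ → ℝ, MemIE E a b →
    ∃ (N₁ : ℕ) (f : ℕ → ℕ), ∀ n, N₁ ≤ n → a n = l (f n)

/-- `M(L̃) = limsupₙ lₙ/mₙ₊₁`, as an element of `[0,∞]`. -/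
noncomputable def Mlim (l m : ℕ → ℝ) : ℝ≥0∞ :=
  limsup (fun n => ENNReal.ofReal (l n / m (n + 1))) atTop

/-- `C(τ̃) = inf{ limsupₙ aₙ/τₙ : ((aₙ,bₙ)) ∈ Ĩ_Eᵈ(τ̃) }` (inf ∅ = ∞). -/
noncomputable def Ctau (E : Set ℝ) (t : ℕ → ℝ) : ℝ≥0∞ :=
  sInf {c : ℝ≥0∞ | ∃ a b : ℕ → ℝ, MemIE E a b ∧ (∀ᶠ n in atTop, t n ≤ a n) ∧
    c = limsup (fun n => ENNReal.ofReal (a n / t n)) atTop}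

/-- `C_E = sup_{τ̃ ∈ Ẽ₀ᵈ} C(τ̃)`. -/
noncomputable def Ctot (E : Set ℝ) : ℝ≥0∞ :=
  ⨆ t ∈ {t : ℕ → ℝ | MemE0d E t}, Ctau E t

/-- A normal scaling sequence for the pointed metric space `(E, |·|, 0)`. -/
def IsNormalE (E : Set ℝ) (r : ℕ → ℝ) : Prop :=
  IsScaling r ∧ ∃ s : ℕ → ℝ, (∀ n, s n ∈ E) ∧ AlmostDecreasing s ∧
    Tendsto (fun n => s n / r n) atTop (𝓝 1)

/-- `R*(Ω₀ᴱ(n))`: the sup of all limits `limₙ sₙ/rₙ` over normal scaling sequences `r`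
for `(E,|·|,0)` and sequences `s` in `E` for which the finite limit exists (sup ∅ = 0). -/
noncomputable def RstarE (E : Set ℝ) : ℝ≥0∞ :=
  sSup {c : ℝ≥0∞ | ∃ (r s : ℕ → ℝ) (L : ℝ), IsNormalE E r ∧ (∀ n, s n ∈ E) ∧
    Tendsto (fun n => s n / r n) atTop (𝓝 L) ∧ c = ENNReal.ofReal L}

/-- `x̃` and `ỹ` are mutually stable w.r.t. `r̃`. -/
def MutuallyStable {X : Type*} [MetricSpace X] (r : ℕ → ℝ) (x y : ℕ → X) : Prop :=
  ∃ L : ℝ, Tendsto (fun n => dist (x n) (y n) / r n) atTop (𝓝 L)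

/-- A family of sequences is self-stable w.r.t. `r̃`. -/
def SelfStable {X : Type*} [MetricSpace X] (r : ℕ → ℝ) (F : Set (ℕ → X)) : Prop :=
  ∀ x ∈ F, ∀ y ∈ F, MutuallyStable r x y

/-- A maximal self-stable family w.r.t. `r̃`. -/
def MaximalSelfStable {X : Type*} [MetricSpace X] (r : ℕ → ℝ) (F : Set (ℕ → X)) : Prop :=
  SelfStable r F ∧ ∀ z : ℕ → X, z ∈ F ∨ ∃ x ∈ F, ¬ MutuallyStable r x z

/-- A normal scaling sequence for the pointed metric space `(X,d,p)`. -/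
def IsNormalX {X : Type*} [MetricSpace X] (p : X) (r : ℕ → ℝ) : Prop :=
  IsScaling r ∧ ∃ x : ℕ → X, AlmostDecreasing (fun n => dist (x n) p) ∧
    Tendsto (fun n => dist (x n) p / r n) atTop (𝓝 1)

/-- `R*(Ω_pˣ(n))`: the sup of all limits `limₙ d(xₙ,p)/rₙ` over normal scaling
sequences `r̃` and sequences `x̃` in `X` for which the finite limit exists (sup ∅ = 0). -/
noncomputable def RstarX {X : Type*} [MetricSpace X] (p : X) : ℝ≥0∞ :=
  sSup {c : ℝ≥0∞ | ∃ (r : ℕ → ℝ) (x : ℕ → X) (L : ℝ), IsNormalX p r ∧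
    Tendsto (fun n => dist (x n) p / r n) atTop (𝓝 L) ∧ c = ENNReal.ofReal L}

/-- `R₊(Ω_pˣ(n))`: the inf of the strictly positive such limits (inf ∅ = ∞). -/
noncomputable def RlowX {X : Type*} [MetricSpace X] (p : X) : ℝ≥0∞ :=
  sInf {c : ℝ≥0∞ | ∃ (r : ℕ → ℝ) (x : ℕ → X) (L : ℝ), IsNormalX p r ∧
    Tendsto (fun n => dist (x n) p / r n) atTop (𝓝 L) ∧ 0 < L ∧ c = ENNReal.ofReal L}

/-!
Everything is read off the distance set `E = {d(x,p)}`: the limits entering `R*` and `R₊` are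
exactly the limits `lim sₙ/τₙ` with `τ` an almost decreasing null sequence in `E \ {0}` and `s` in
`E` (`ratioLimits E`). Swapping `s` and `τ` along a subsequence on which `s` decreases shows that
this set is closed under `L ↦ L⁻¹` on `L > 0`, so `R₊ = 1/R*`. The other statements compare `R*`
with the gaps of `E`: if `R* < C`, then near `0` no two points of `E` have ratio in `(C, Cʲ]`, so
the points of `E` just below and just above `C τ` bound a gap of `E` of unbounded relative depth.
-/

theorem Antitone.almostDecreasing {t : ℕ → ℝ} (h : Antitone t) : AlmostDecreasing t :=
  Eventually.of_forall fun n => h n.le_succ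

theorem AlmostDecreasing.comp_add {t : ℕ → ℝ} (h : AlmostDecreasing t) (N : ℕ) :
    AlmostDecreasing fun n => t (n + N) := by
  filter_upwards [(tendsto_add_atTop_nat N).eventually h] with n hn
  rwa [Nat.add_right_comm]

theorem AlmostDecreasing.exists_antitoneOn {t : ℕ → ℝ} (h : AlmostDecreasing t) :
    ∃ N, AntitoneOn t {n | N ≤ n} :=
  let ⟨N, hN⟩ := eventually_atTop.mp h
  ⟨N, antitoneOn_nat_Ici_of_succ_le hN⟩

theorem exists_seq_strictAnti_tendsto_zero_of_forall_exists {α : Type*} {P : ℕ → α → Prop}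
    (f : α → ℝ) (h : ∀ n, ∀ c > 0, ∃ a, P n a ∧ 0 < f a ∧ f a < c) :
    ∃ q : ℕ → α, (∀ n, P n (q n) ∧ 0 < f (q n)) ∧ StrictAnti (f ∘ q) ∧
      Tendsto (f ∘ q) atTop (𝓝 0) := by
  have h' : ∀ n (c : ℝ), ∃ a, 0 < c → P n a ∧ 0 < f a ∧ f a < c := fun n c => by
    by_cases hc : 0 < c
    · obtain ⟨a, ha⟩ := h n c hc
      exact ⟨a, fun _ => ha⟩
    · obtain ⟨a, -⟩ := h 0 1 one_pos
      exact ⟨a, fun h => absurd h hc⟩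
  choose g hg using h'
  let q : ℕ → α := fun n =>
    Nat.rec (g 0 1) (fun k a => g (k + 1) (min (f a) (1 / ((k + 1 : ℕ) + 1 : ℝ)))) n
  have hq : ∀ n, P n (q n) ∧ 0 < f (q n) ∧ f (q n) < 1 / ((n : ℝ) + 1) := by
    intro n
    induction n with
    | zero => simpa [q] using hg 0 1 one_pos
    | succ k ih =>
      obtain ⟨hP, hpos, hlt⟩ := hg (k + 1) (min (f (q k)) (1 / ((k + 1 : ℕ) + 1 : ℝ)))
        (lt_min ih.2.1 (by positivity))
      exact ⟨hP, hpos, hlt.trans_le (min_le_right _ _)⟩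
  refine ⟨q, fun n => ⟨(hq n).1, (hq n).2.1⟩, strictAnti_nat_of_succ_lt fun n => ?_, ?_⟩
  · exact (hg (n + 1) (min (f (q n)) (1 / ((n + 1 : ℕ) + 1 : ℝ)))
      (lt_min (hq n).2.1 (by positivity))).2.2.trans_le (min_le_left _ _)
  · exact squeeze_zero (fun n => (hq n).2.1.le) (fun n => (hq n).2.2.le)
      tendsto_one_div_add_atTop_nhds_zero_nat

theorem tendsto_sub_div_self_iff {ι : Type*} {l : Filter ι} {A B : ι → ℝ}
    (hB : ∀ᶠ i in l, B i ≠ 0) :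
    Tendsto (fun i => (B i - A i) / B i) l (𝓝 1) ↔ Tendsto (fun i => A i / B i) l (𝓝 0) := by
  have heq : (fun i => (B i - A i) / B i) =ᶠ[l] fun i => 1 - A i / B i :=
    hB.mono fun i hi => by simp only [sub_div, div_self hi]
  rw [tendsto_congr' heq]
  constructor <;> intro h <;> simpa using (tendsto_const_nhds (x := (1 : ℝ))).sub h

theorem tendsto_sub_div_self_of_forall_pow_mul_le {A B e : ℕ → ℝ} {C : ℝ} (hC1 : 1 < C)
    (he : ∀ n, 0 < e n) (hA : ∀ n, 0 ≤ A n ∧ A n ≤ C * e n)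
    (hB : ∀ j : ℕ, ∀ᶠ n in atTop, C ^ j * e n ≤ B n) :
    Tendsto (fun n => (B n - A n) / B n) atTop (𝓝 1) := by
  have hC0 : 0 < C := one_pos.trans hC1
  have hB_pos : ∀ᶠ n in atTop, 0 < B n :=
    (hB 0).mono fun n hn => (he n).trans_le (by simpa using hn)
  rw [tendsto_sub_div_self_iff (hB_pos.mono fun n hn => hn.ne')]
  refine tendsto_order.2 ⟨fun ε hε => hB_pos.mono fun n hn =>
    hε.trans_le (div_nonneg (hA n).1 hn.le), fun ε hε => ?_⟩
  obtain ⟨j, hj⟩ := ((tendsto_pow_atTop_atTop_of_one_lt hC1).eventually_gt_atTop (C / ε)).exists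
  filter_upwards [hB j] with n hn
  have := he n
  calc A n / B n ≤ C * e n / (C ^ j * e n) :=
        div_le_div₀ (by positivity) (hA n).2 (by positivity) hn
    _ = C / C ^ j := mul_div_mul_right _ _ (he n).ne'
    _ < ε := (div_lt_comm₀ (by positivity) hε).mpr hj

theorem exists_forall_lt_of_eventually_le {u : ℕ → ℝ} {c : ℝ} (h : ∀ᶠ n in atTop, u n ≤ c) :
    ∃ M, ∀ n, u n < M := by
  obtain ⟨M, hM⟩ := (isBoundedUnder_of_eventually_le h).bddAbove_range
  exact ⟨M + 1, fun n => (hM ⟨n, rfl⟩).trans_lt (lt_add_one M)⟩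

theorem asymp_of_eventually_div_le {x y : ℕ → ℝ} (hx : ∀ n, 0 < x n) (hy : ∀ n, 0 < y n)
    {c₁ c₂ : ℝ} (hxy : ∀ᶠ n in atTop, x n / y n ≤ c₁) (hyx : ∀ᶠ n in atTop, y n / x n ≤ c₂) :
    Asymp x y := by
  obtain ⟨M₁, hM₁⟩ := exists_forall_lt_of_eventually_le hxy
  obtain ⟨M₂, hM₂⟩ := exists_forall_lt_of_eventually_le hyx
  have hM₁_pos : 0 < M₁ := (div_pos (hx 0) (hy 0)).trans (hM₁ 0)
  refine ⟨M₁⁻¹, M₂, inv_pos.mpr hM₁_pos, (div_pos (hy 0) (hx 0)).trans (hM₂ 0), fun n => ⟨?_, ?_⟩⟩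
  · rw [inv_mul_lt_iff₀ hM₁_pos]
    exact (div_lt_iff₀ (hy n)).mp (hM₁ n)
  · exact (div_lt_iff₀ (hx n)).mp (hM₂ n)

def IsAccAtZero (E : Set ℝ) : Prop := ∀ ε > 0, ∃ e ∈ E, 0 < e ∧ e < ε

def ratioLimits (E : Set ℝ) : Set ℝ :=
  {L | ∃ τ s : ℕ → ℝ, (∀ n, τ n ∈ E ∧ 0 < τ n) ∧ AlmostDecreasing τ ∧
    Tendsto τ atTop (𝓝 0) ∧ (∀ n, s n ∈ E) ∧ Tendsto (fun n => s n / τ n) atTop (𝓝 L)}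

noncomputable def ratioSup (E : Set ℝ) : ℝ≥0∞ := sSup (ENNReal.ofReal '' ratioLimits E)

noncomputable def ratioInf (E : Set ℝ) : ℝ≥0∞ :=
  sInf (ENNReal.ofReal '' (ratioLimits E ∩ Ioi 0))

section RatioLimits

variable {E : Set ℝ}

theorem one_mem_ratioLimits (hE : IsAccAtZero E) : (1 : ℝ) ∈ ratioLimits E := by
  obtain ⟨t, ht, hanti, hlim⟩ := exists_seq_strictAnti_tendsto_zero_of_forall_exists
    (P := fun _ e => e ∈ E) id fun _ c hc => (hE c hc).imp fun e he => ⟨he.1, he.2⟩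
  refine ⟨t, t, ht, hanti.antitone.almostDecreasing, hlim, fun n => (ht n).1, ?_⟩
  exact tendsto_const_nhds.congr fun n => (div_self (ht n).2.ne').symm

theorem inv_mem_ratioLimits {L : ℝ} (hL : L ∈ ratioLimits E) (hL0 : 0 < L) :
    L⁻¹ ∈ ratioLimits E := by
  obtain ⟨τ, s, hτ, -, hτ0, hs, hlim⟩ := hL
  have hs_eq : ∀ n, s n = s n / τ n * τ n := fun n => (div_mul_cancel₀ _ (hτ n).2.ne').symm
  have hs_pos : ∀ᶠ n in atTop, 0 < s n := by
    filter_upwards [hlim.eventually_const_lt hL0] with n hn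
    rw [hs_eq]
    exact mul_pos hn (hτ n).2
  have hs0 : Tendsto s atTop (𝓝 0) := by
    simpa [← hs_eq] using hlim.mul hτ0
  obtain ⟨φ, hφ, hanti, hlim'⟩ := exists_seq_strictAnti_tendsto_zero_of_forall_exists
    (P := fun n k => n ≤ k) s fun n c hc =>
      ((hs_pos.and (hs0.eventually_lt_const hc)).and (eventually_ge_atTop n)).exists.imp
        fun k hk => ⟨hk.2, hk.1⟩
  have hφ_top : Tendsto φ atTop atTop := tendsto_atTop_mono (fun n => (hφ n).1) tendsto_id
  refine ⟨s ∘ φ, τ ∘ φ, fun n => ⟨hs _, (hφ n).2⟩, hanti.antitone.almostDecreasing, hlim',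
    fun n => (hτ _).1, ?_⟩
  simpa [Function.comp_def, inv_div] using (hlim.inv₀ hL0.ne').comp hφ_top

theorem ofReal_le_ratioSup {L : ℝ} (hL : L ∈ ratioLimits E) : ENNReal.ofReal L ≤ ratioSup E :=
  le_sSup ⟨L, hL, rfl⟩

theorem lt_of_ratioSup_lt {L C : ℝ} (hL : L ∈ ratioLimits E)
    (hC : ratioSup E < ENNReal.ofReal C) : L < C :=
  (ENNReal.ofReal_lt_ofReal_iff'.mp ((ofReal_le_ratioSup hL).trans_lt hC)).1

theorem ratioInf_eq_inv_ratioSup : ratioInf E = (ratioSup E)⁻¹ := by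
  apply le_antisymm
  · rw [← ENNReal.inv_le_inv, inv_inv]
    refine sSup_le ?_
    rintro _ ⟨L, hL, rfl⟩
    rcases le_or_gt L 0 with hL0 | hL0
    · simp [ENNReal.ofReal_of_nonpos hL0]
    · rw [ENNReal.le_inv_iff_le_inv, ← ENNReal.ofReal_inv_of_pos hL0]
      exact sInf_le ⟨L⁻¹, ⟨inv_mem_ratioLimits hL hL0, inv_pos.mpr hL0⟩, rfl⟩
  · refine le_sInf ?_
    rintro _ ⟨L, ⟨hL, hL0 : 0 < L⟩, rfl⟩
    rw [ENNReal.inv_le_iff_inv_le, ← ENNReal.ofReal_inv_of_pos hL0]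
    exact ofReal_le_ratioSup (inv_mem_ratioLimits hL hL0)

end RatioLimits

section DistanceSet

variable {X : Type*} [MetricSpace X]

theorem isAccAtZero_dist {p : X} (hp : p ∈ closure ({p}ᶜ : Set X)) :
    IsAccAtZero {t : ℝ | ∃ x : X, dist x p = t} := by
  intro ε hε
  obtain ⟨x, hx, hxp⟩ := Metric.mem_closure_iff.mp hp ε hε
  exact ⟨dist x p, ⟨x, rfl⟩, dist_pos.mpr hx, dist_comm p x ▸ hxp⟩

theorem mem_ratioLimits_of_isNormalX {p : X} {r : ℕ → ℝ} {x : ℕ → X} {L : ℝ}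
    (hr : IsNormalX p r) (hx : Tendsto (fun n => dist (x n) p / r n) atTop (𝓝 L)) :
    L ∈ ratioLimits {t : ℝ | ∃ x : X, dist x p = t} := by
  obtain ⟨⟨hr_pos, hr0⟩, y, hy_dec, hy⟩ := hr
  have hy_eq : ∀ n, dist (y n) p = dist (y n) p / r n * r n := fun n =>
    (div_mul_cancel₀ _ (hr_pos n).ne').symm
  have hy_pos : ∀ᶠ n in atTop, 0 < dist (y n) p := by
    filter_upwards [hy.eventually_const_lt one_pos] with n hn
    rw [hy_eq]
    exact mul_pos hn (hr_pos n)
  have hy0 : Tendsto (fun n => dist (y n) p) atTop (𝓝 0) := by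
    simpa [← hy_eq] using hy.mul hr0
  have hratio : Tendsto (fun n => dist (x n) p / dist (y n) p) atTop (𝓝 L) := by
    refine (div_one L ▸ hx.div hy one_ne_zero).congr' (Eventually.of_forall fun n => ?_)
    exact div_div_div_cancel_right₀ (hr_pos n).ne' _ _
  obtain ⟨N, hN⟩ := eventually_atTop.mp hy_pos
  exact ⟨fun n => dist (y (n + N)) p, fun n => dist (x (n + N)) p,
    fun n => ⟨⟨y _, rfl⟩, hN _ (Nat.le_add_left N n)⟩, hy_dec.comp_add N,
    (tendsto_add_atTop_iff_nat N).mpr hy0, fun n => ⟨x _, rfl⟩,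
    (tendsto_add_atTop_iff_nat N).mpr hratio⟩

theorem exists_isNormalX_of_mem_ratioLimits {p : X} {L : ℝ}
    (hL : L ∈ ratioLimits {t : ℝ | ∃ x : X, dist x p = t}) :
    ∃ (r : ℕ → ℝ) (x : ℕ → X), IsNormalX p r ∧
      Tendsto (fun n => dist (x n) p / r n) atTop (𝓝 L) := by
  obtain ⟨τ, s, hτ, hτ_dec, hτ0, hs, hlim⟩ := hL
  choose y hy using fun n => (hτ n).1
  choose x hx using hs
  refine ⟨τ, x, ⟨⟨fun n => (hτ n).2, hτ0⟩, y, by simpa only [hy] using hτ_dec, ?_⟩,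
    by simpa only [hx] using hlim⟩
  exact tendsto_const_nhds.congr fun n => by rw [hy, div_self (hτ n).2.ne']

theorem RstarX_eq_ratioSup (p : X) :
    RstarX p = ratioSup {t : ℝ | ∃ x : X, dist x p = t} := by
  refine congrArg sSup (Set.ext fun c => ⟨?_, ?_⟩)
  · rintro ⟨r, x, L, hr, hx, rfl⟩
    exact ⟨L, mem_ratioLimits_of_isNormalX hr hx, rfl⟩
  · rintro ⟨L, hL, rfl⟩
    obtain ⟨r, x, hr, hx⟩ := exists_isNormalX_of_mem_ratioLimits hL
    exact ⟨r, x, L, hr, hx, rfl⟩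

theorem RlowX_eq_ratioInf (p : X) :
    RlowX p = ratioInf {t : ℝ | ∃ x : X, dist x p = t} := by
  refine congrArg sInf (Set.ext fun c => ⟨?_, ?_⟩)
  · rintro ⟨r, x, L, hr, hx, hL0, rfl⟩
    exact ⟨L, ⟨mem_ratioLimits_of_isNormalX hr hx, hL0⟩, rfl⟩
  · rintro ⟨L, ⟨hL, hL0⟩, rfl⟩
    obtain ⟨r, x, hr, hx⟩ := exists_isNormalX_of_mem_ratioLimits hL
    exact ⟨r, x, L, hr, hx, hL0, rfl⟩

end DistanceSet

section Gaps

variable {E : Set ℝ}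

namespace IsGapComponent

variable {a b : ℝ}

theorem le_of_mem (h : IsGapComponent E a b) {y : ℝ} (hy : y ∈ E) (hay : a < y) : b ≤ y :=
  not_lt.mp fun hyb => h.2.2.1.subset ⟨⟨hay, hyb⟩, hy⟩

theorem left_pos (h : IsGapComponent E a b) (hE : IsAccAtZero E) : 0 < a := by
  refine h.1.lt_of_ne fun ha => ?_
  obtain ⟨e, he, he0, heb⟩ := hE b (ha ▸ h.2.1)
  exact (h.le_of_mem he (ha ▸ he0)).not_gt heb

theorem right_pos (h : IsGapComponent E a b) : 0 < b :=
  h.1.trans_lt h.2.1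

theorem exists_mem_Ico (h : IsGapComponent E a b) {ε : ℝ} (hε : 0 < ε) :
    ∃ y ∈ E, b ≤ y ∧ y < b + ε := by
  by_contra! hcon
  have hempty : Ioo a (b + ε) ∩ E = ∅ := by
    refine eq_empty_iff_forall_notMem.mpr fun y ⟨⟨hay, hyb⟩, hy⟩ => ?_
    exact hyb.not_ge (hcon y hy (h.le_of_mem hy hay))
  linarith [(h.2.2.2 a (b + ε) h.1 le_rfl (by linarith) hempty).2]

theorem exists_mem_mul_lt (h : IsGapComponent E a b) {C y : ℝ} (hC : 0 < C) (hy : C * b < y) :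
    ∃ e ∈ E, b ≤ e ∧ C * e < y := by
  obtain ⟨e, he, hbe, heb⟩ := h.exists_mem_Ico (sub_pos.2 ((lt_div_iff₀' hC).2 hy))
  exact ⟨e, he, hbe, (lt_div_iff₀' hC).1 (by linarith)⟩

end IsGapComponent

theorem isGapComponent_of_isLUB_of_isGLB {x a b : ℝ} (ha : IsLUB (E ∩ Iic x) a)
    (hb : IsGLB (E ∩ Ioi x) b) (ha0 : 0 ≤ a) (hab : a < b) : IsGapComponent E a b := by
  refine ⟨ha0, hab, eq_empty_iff_forall_notMem.mpr fun y ⟨⟨hay, hyb⟩, hy⟩ => ?_, ?_⟩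
  · rcases le_or_gt y x with hyx | hxy
    · exact (ha.1 ⟨hy, hyx⟩).not_gt hay
    · exact (hb.1 ⟨hy, hxy⟩).not_gt hyb
  · intro a' b' _ ha' hb' hempty
    refine ⟨ha'.eq_of_not_lt fun ha'a => ?_, (hb'.eq_of_not_lt fun hbb' => ?_).symm⟩
    · obtain ⟨y, hy, ha'y, hya⟩ := ha.exists_between ha'a
      exact hempty.subset ⟨⟨ha'y, hya.trans_lt (hab.trans_le hb')⟩, hy.1⟩
    · obtain ⟨y, hy, hby, hyb'⟩ := hb.exists_between hbb'
      exact hempty.subset ⟨⟨ha'.trans_lt (hab.trans_le hby), hyb'⟩, hy.1⟩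

theorem exists_memIE_of_eventually {a b : ℕ → ℝ}
    (hgap : ∀ᶠ n in atTop, IsGapComponent E (a n) (b n)) (hdec : AlmostDecreasing a)
    (ha : Tendsto a atTop (𝓝 0)) (hratio : Tendsto (fun n => (b n - a n) / b n) atTop (𝓝 1)) :
    ∃ N, MemIE E (fun n => a (max n N)) (fun n => b (max n N)) := by
  obtain ⟨N, hN⟩ := eventually_atTop.mp hgap
  have hmax : ∀ᶠ n in atTop, max n N = n := (eventually_ge_atTop N).mono fun n => max_eq_left
  refine ⟨N, fun n => hN _ (le_max_right _ _), ?_, ?_, ?_⟩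
  · filter_upwards [hdec, eventually_ge_atTop N] with n hn hNn
    rwa [max_eq_left hNn, max_eq_left (hNn.trans n.le_succ)]
  · exact ha.congr' (hmax.mono fun n hn => by simp only [hn])
  · exact hratio.congr' (hmax.mono fun n hn => by simp only [hn])

theorem MemIE.eventually_mul_lt_of_mem {a b : ℕ → ℝ} (h : MemIE E a b) (K : ℝ) :
    ∀ᶠ n in atTop, ∀ w ∈ E, a n < w → K * a n < w := by
  have hb : ∀ n, 0 < b n := fun n => (h.1 n).right_pos
  have hdiv : Tendsto (fun n => a n / b n) atTop (𝓝 0) :=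
    (tendsto_sub_div_self_iff (Eventually.of_forall fun n => (hb n).ne')).1 h.2.2.2
  have hK : 0 < max K 1 := lt_max_of_lt_right one_pos
  filter_upwards [hdiv.eventually_lt_const (one_div_pos.2 hK)] with n hn w hw haw
  rw [div_lt_div_iff₀ (hb n) hK, one_mul] at hn
  calc K * a n ≤ max K 1 * a n := mul_le_mul_of_nonneg_right (le_max_left _ _) (h.1 n).1
    _ < b n := by rwa [mul_comm]
    _ ≤ w := (h.1 n).le_of_mem hw haw

theorem MemIE.exists_le_of_mem {l m : ℕ → ℝ} (h : MemIE E l m) {e : ℝ} (he : e ∈ E) (he0 : 0 < e) {K : ℕ}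
    (heK : e ≤ l K) : ∃ k ≥ K, m (k + 1) ≤ e ∧ e ≤ l k := by
  obtain ⟨k, hKk, hek, hlk⟩ : ∃ k ≥ K, e ≤ l k ∧ l (k + 1) < e := by
    by_contra! hcon
    have hall : ∀ j, e ≤ l (K + j) := fun j => by
      induction j with
      | zero => exact heK
      | succ j ih => exact hcon _ (Nat.le_add_right _ _) ih
    obtain ⟨N, hN⟩ := eventually_atTop.mp (h.2.2.1.eventually_lt_const he0)
    exact (hN (K + N) (Nat.le_add_left _ _)).not_ge (hall N)
  exact ⟨k, hKk, (h.1 (k + 1)).le_of_mem he hlk, hek⟩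

noncomputable def lowerGapEnd (E : Set ℝ) (x : ℝ) : ℝ := sSup (E ∩ Iic x)

noncomputable def upperGapEnd (E : Set ℝ) (x : ℝ) : ℝ := sInf (E ∩ Ioi x)

theorem isLUB_lowerGapEnd {x : ℝ} (hne : (E ∩ Iic x).Nonempty) :
    IsLUB (E ∩ Iic x) (lowerGapEnd E x) :=
  isLUB_csSup hne ⟨x, fun _ hy => hy.2⟩

theorem isGLB_upperGapEnd {x : ℝ} (hne : (E ∩ Ioi x).Nonempty) :
    IsGLB (E ∩ Ioi x) (upperGapEnd E x) :=
  isGLB_csInf hne ⟨x, fun _ hy => hy.2.le⟩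

theorem le_lowerGapEnd {e x : ℝ} (he : e ∈ E) (hex : e ≤ x) : e ≤ lowerGapEnd E x :=
  (isLUB_lowerGapEnd ⟨e, he, hex⟩).1 ⟨he, hex⟩

theorem lowerGapEnd_le {x : ℝ} (hne : (E ∩ Iic x).Nonempty) : lowerGapEnd E x ≤ x :=
  (isLUB_lowerGapEnd hne).2 fun _ hy => hy.2

theorem lowerGapEnd_mono {x y : ℝ} (hne : (E ∩ Iic x).Nonempty) (hxy : x ≤ y) :
    lowerGapEnd E x ≤ lowerGapEnd E y :=
  csSup_le_csSup ⟨y, fun _ hz => hz.2⟩ hne (inter_subset_inter_right _ (Iic_subset_Iic.2 hxy))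

theorem le_upperGapEnd {x c : ℝ} (hne : (E ∩ Ioi x).Nonempty) (hc : ∀ y ∈ E, x < y → c ≤ y) :
    c ≤ upperGapEnd E x :=
  (isGLB_upperGapEnd hne).2 fun y hy => hc y hy.1 hy.2

theorem isGapComponent_lowerGapEnd_upperGapEnd {e x : ℝ} (he : e ∈ E) (he0 : 0 < e)
    (hex : e ≤ x) (hne : (E ∩ Ioi x).Nonempty) (hx : x < upperGapEnd E x) :
    IsGapComponent E (lowerGapEnd E x) (upperGapEnd E x) :=
  isGapComponent_of_isLUB_of_isGLB (isLUB_lowerGapEnd ⟨e, he, hex⟩) (isGLB_upperGapEnd hne)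
    (he0.le.trans (le_lowerGapEnd he hex)) ((lowerGapEnd_le ⟨e, he, hex⟩).trans_lt hx)

/-- Otherwise a subsequence of ratios `y / e ∈ (u, v]` with `e → 0` would converge to an element
of `ratioLimits E` that is `≥ u`. -/
theorem exists_forall_mul_lt_of_ratioSup_lt {u : ℝ} (hu : ratioSup E < ENNReal.ofReal u)
    (v : ℝ) : ∃ δ > 0, ∀ e ∈ E, 0 < e → e < δ → ∀ y ∈ E, u * e < y → v * e < y := by
  by_contra! hcon
  obtain ⟨q, hq, hanti, hlim⟩ := exists_seq_strictAnti_tendsto_zero_of_forall_exists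
    (P := fun (_ : ℕ) (q : ℝ × ℝ) => q.1 ∈ E ∧ q.2 ∈ E ∧ u * q.1 < q.2 ∧ q.2 ≤ v * q.1) Prod.fst
    fun _ δ hδ => by
      obtain ⟨e, he, he0, heδ, y, hy, huy, hyv⟩ := hcon δ hδ
      exact ⟨(e, y), ⟨he, hy, huy, hyv⟩, he0, heδ⟩
  have hratio : ∀ n, (q n).2 / (q n).1 ∈ Icc u v := fun n =>
    ⟨(le_div_iff₀ (hq n).2).2 (hq n).1.2.2.1.le, (div_le_iff₀ (hq n).2).2 (hq n).1.2.2.2⟩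
  obtain ⟨L, hL, ψ, hψ, hlimψ⟩ := tendsto_subseq_of_bounded (Metric.isBounded_Icc u v) hratio
  have hmem : L ∈ ratioLimits E :=
    ⟨fun n => (q (ψ n)).1, fun n => (q (ψ n)).2, fun n => ⟨(hq _).1.1, (hq _).2⟩,
      (hanti.comp_strictMono hψ).antitone.almostDecreasing, hlim.comp hψ.tendsto_atTop,
      fun n => (hq _).1.2.1, hlimψ⟩
  rw [closure_Icc] at hL
  exact (lt_of_ratioSup_lt hmem hu).not_ge hL.1

theorem lowerGapEnd_mul_mem_Icc {x C : ℝ} (hx : x ∈ E) (hx0 : 0 ≤ x) (hC1 : 1 ≤ C) :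
    lowerGapEnd E (C * x) ∈ Icc x (C * x) :=
  have hle : x ≤ C * x := le_mul_of_one_le_left hx0 hC1
  ⟨le_lowerGapEnd hx hle, lowerGapEnd_le ⟨x, hx, hle⟩⟩

variable {C : ℝ} {e : ℕ → ℝ}

theorem tendsto_lowerGapEnd_mul (hC1 : 1 ≤ C) (he : ∀ n, e n ∈ E ∧ 0 < e n)
    (he0 : Tendsto e atTop (𝓝 0)) : Tendsto (fun n => lowerGapEnd E (C * e n)) atTop (𝓝 0) :=
  squeeze_zero (fun n => (he n).2.le.trans (lowerGapEnd_mul_mem_Icc (he n).1 (he n).2.le hC1).1)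
    (fun n => (lowerGapEnd_mul_mem_Icc (he n).1 (he n).2.le hC1).2)
    (by simpa using he0.const_mul C)

theorem eventually_pow_mul_le_upperGapEnd (hC : ratioSup E < ENNReal.ofReal C)
    (he : ∀ n, e n ∈ E ∧ 0 < e n) (he0 : Tendsto e atTop (𝓝 0)) (j : ℕ) :
    ∀ᶠ n in atTop, (E ∩ Ioi (C * e n)).Nonempty ∧ C ^ j * e n ≤ upperGapEnd E (C * e n) := by
  obtain ⟨δ, hδ, hgap⟩ := exists_forall_mul_lt_of_ratioSup_lt hC (C ^ j)
  have hCe : Tendsto (fun n => C * e n) atTop (𝓝 0) := by simpa using he0.const_mul C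
  filter_upwards [hCe.eventually_lt_const (he 0).2, he0.eventually_lt_const hδ] with n hn hnδ
  have hne : (E ∩ Ioi (C * e n)).Nonempty := ⟨e 0, (he 0).1, hn⟩
  exact ⟨hne, le_upperGapEnd hne fun y hy hCy => (hgap _ (he n).1 (he n).2 hnδ y hy hCy).le⟩

theorem eventually_isGapComponent_gapEnds (hC : ratioSup E < ENNReal.ofReal C) (hC1 : 1 < C)
    (he : ∀ n, e n ∈ E ∧ 0 < e n) (he0 : Tendsto e atTop (𝓝 0)) :
    ∀ᶠ n in atTop, IsGapComponent E (lowerGapEnd E (C * e n)) (upperGapEnd E (C * e n)) := by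
  filter_upwards [eventually_pow_mul_le_upperGapEnd hC he he0 2] with n ⟨hne, hle⟩
  exact isGapComponent_lowerGapEnd_upperGapEnd (he n).1 (he n).2
    (le_mul_of_one_le_left (he n).2.le hC1.le) hne
    ((mul_lt_mul_of_pos_right (lt_self_pow₀ hC1 one_lt_two) (he n).2).trans_le hle)

theorem tendsto_gapEnds_ratio (hC : ratioSup E < ENNReal.ofReal C) (hC1 : 1 < C)
    (he : ∀ n, e n ∈ E ∧ 0 < e n) (he0 : Tendsto e atTop (𝓝 0)) :
    Tendsto (fun n => (upperGapEnd E (C * e n) - lowerGapEnd E (C * e n)) /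
      upperGapEnd E (C * e n)) atTop (𝓝 1) := by
  refine tendsto_sub_div_self_of_forall_pow_mul_le hC1 (fun n => (he n).2) (fun n => ?_)
    fun j => ?_
  · have hmem := lowerGapEnd_mul_mem_Icc (he n).1 (he n).2.le hC1.le
    exact ⟨(he n).2.le.trans hmem.1, hmem.2⟩
  · exact (eventually_pow_mul_le_upperGapEnd hC he he0 j).mono fun _ h => h.2

end Gaps

section Porosity

variable {E : Set ℝ}

theorem csp_of_ratioSup_lt_top (hE0 : ∀ e ∈ E, 0 ≤ e) (hE : IsAccAtZero E)
    (hfin : ratioSup E < ⊤) : CSP E := by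
  rintro t ⟨ht_dec, ht, ht0⟩
  have ht_pos : ∀ n, t n ∈ E ∧ 0 < t n := fun n =>
    ⟨(ht n).1, (hE0 _ (ht n).1).lt_of_ne' (ht n).2⟩
  obtain ⟨C, -, hC, -⟩ := ENNReal.lt_iff_exists_real_btwn.mp hfin
  have hC1 : 1 < C := lt_of_ratioSup_lt (one_mem_ratioLimits hE) hC
  have ha := fun n => lowerGapEnd_mul_mem_Icc (ht_pos n).1 (ht_pos n).2.le hC1.le
  have ha_dec : AlmostDecreasing fun n => lowerGapEnd E (C * t n) := by
    filter_upwards [ht_dec] with n hn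
    exact lowerGapEnd_mono ⟨_, (ht_pos (n + 1)).1, le_mul_of_one_le_left (ht_pos _).2.le hC1.le⟩
      (mul_le_mul_of_nonneg_left hn (one_pos.trans hC1).le)
  obtain ⟨N, hN⟩ := exists_memIE_of_eventually
    (eventually_isGapComponent_gapEnds hC hC1 ht_pos ht0) ha_dec
    (tendsto_lowerGapEnd_mul hC1.le ht_pos ht0)
    (tendsto_gapEnds_ratio hC hC1 ht_pos ht0)
  refine ⟨_, _, hN, asymp_of_eventually_div_le (c₁ := 1) (c₂ := C) (fun n => (ht_pos n).2)
    (fun n => (ht_pos _).2.trans_le (ha _).1) ?_ ?_⟩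
  · filter_upwards [eventually_ge_atTop N] with n hn
    rw [max_eq_left hn, div_le_one ((ht_pos n).2.trans_le (ha n).1)]
    exact (ha n).1
  · filter_upwards [eventually_ge_atTop N] with n hn
    rw [max_eq_left hn, div_le_iff₀ (ht_pos n).2]
    exact (ha n).2

theorem exists_pairs_of_ratioSup_eq_top (h : ratioSup E = ⊤) (k : ℕ) :
    ∃ K > 0, ∀ c > 0, ∃ τ ∈ E, 0 < τ ∧ τ < c ∧ ∃ s ∈ E, k * τ < s ∧ s < K * τ := by
  obtain ⟨_, ⟨L, hL, rfl⟩, hkL⟩ := sSup_eq_top.mp h (ENNReal.ofReal k) ENNReal.ofReal_lt_top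
  have hkL : (k : ℝ) < L := (ENNReal.ofReal_lt_ofReal_iff'.mp hkL).1
  obtain ⟨τ, s, hτ, -, hτ0, hs, hlim⟩ := hL
  refine ⟨L + 1, by linarith [k.cast_nonneg (α := ℝ)], fun c hc => ?_⟩
  obtain ⟨n, hτc, hkn, hnL⟩ := ((hτ0.eventually_lt_const hc).and
    ((hlim.eventually_const_lt hkL).and (hlim.eventually_lt_const (lt_add_one L)))).exists
  exact ⟨τ n, (hτ n).1, (hτ n).2, hτc, s n, hs n, (lt_div_iff₀ (hτ n).2).1 hkn,
    (div_lt_iff₀ (hτ n).2).1 hnL⟩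

/-- If `ratioSup E = ⊤`, a null sequence `t` in `E` carries, for every `j`, infinitely many
companions `w ∈ E` with `j tᵢ < w < Kⱼ tᵢ` (index `i` gets the label `j = (Nat.unpair i).1`);
these land just beyond the gaps that `CSP` attaches to `t`, which is impossible since those gaps
become arbitrarily deep. -/
theorem ratioSup_lt_top_of_csp (hcsp : CSP E) : ratioSup E < ⊤ := by
  refine lt_top_iff_ne_top.2 fun htop => ?_
  choose K hK0 hK using exists_pairs_of_ratioSup_eq_top htop
  obtain ⟨q, hq, hanti, hlim⟩ := exists_seq_strictAnti_tendsto_zero_of_forall_exists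
    (P := fun i (q : ℝ × ℝ) => q.1 ∈ E ∧ q.2 ∈ E ∧
      ((Nat.unpair i).1 : ℝ) * q.1 < q.2 ∧ q.2 < K (Nat.unpair i).1 * q.1) Prod.fst
    fun i c hc => by
      obtain ⟨τ, hτ, hτ0, hτc, s, hs, hks, hsK⟩ := hK (Nat.unpair i).1 c hc
      exact ⟨(τ, s), ⟨hτ, hs, hks, hsK⟩, hτ0, hτc⟩
  obtain ⟨a, b, hab, c₁, c₂, hc₁, -, hta⟩ := hcsp (Prod.fst ∘ q)
    ⟨hanti.antitone.almostDecreasing, fun n => ⟨(hq n).1.1, (hq n).2.ne'⟩, hlim⟩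
  obtain ⟨j, hj⟩ := exists_nat_ge c₂
  obtain ⟨N, hN⟩ := eventually_atTop.mp (hab.eventually_mul_lt_of_mem (K j / c₁))
  set i := Nat.pair j N
  obtain ⟨-, hw, hjw, hwK⟩ : (q i).1 ∈ E ∧ (q i).2 ∈ E ∧ (j : ℝ) * (q i).1 < (q i).2 ∧
      (q i).2 < K j * (q i).1 := by simpa [i] using (hq i).1
  have hti := (hq i).2
  have haw : a i < (q i).2 := by
    calc a i < c₂ * (q i).1 := (hta i).2
      _ ≤ j * (q i).1 := mul_le_mul_of_nonneg_right hj hti.le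
      _ < (q i).2 := hjw
  have hKa := hN i (Nat.right_le_pair j N) _ hw haw
  have hcancel : K j / c₁ * (c₁ * (q i).1) = K j * (q i).1 := by field_simp
  have := mul_lt_mul_of_pos_left (hta i).1 (div_pos (hK0 j) hc₁)
  simp only [Function.comp_apply] at this
  linarith

end Porosity

section UniversalGaps

variable {E : Set ℝ} {l m : ℕ → ℝ}

/-- A ratio `sₙ / τₙ` with `τₙ ∈ [m_{k+1}, l_k]` is either at most `l_k / m_{k+1}` (when `sₙ ≤ l_k`)
or, since `sₙ` then jumps over the deep gap `(l_k, m_k)`, arbitrarily large. -/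
theorem ratioSup_le_Mlim (hE : IsAccAtZero E) (h : MemIE E l m) : ratioSup E ≤ Mlim l m := by
  refine sSup_le ?_
  rintro _ ⟨L, hL, rfl⟩
  by_contra! hML
  obtain ⟨μ, hμ0, hMμ, hμL⟩ := ENNReal.lt_iff_exists_real_btwn.mp hML
  have hμL : μ < L := (ENNReal.ofReal_lt_ofReal_iff'.mp hμL).1
  have hl : ∀ k, 0 < l k := fun k => (h.1 k).left_pos hE
  have hsmall : ∀ᶠ k in atTop, l k / m (k + 1) < μ :=
    (eventually_lt_of_limsup_lt hMμ).mono fun k hk => (ENNReal.ofReal_lt_ofReal_iff'.mp hk).1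
  obtain ⟨K, hK⟩ := eventually_atTop.mp (hsmall.and (h.eventually_mul_lt_of_mem (L + 1)))
  obtain ⟨τ, s, hτ, -, hτ0, hs, hlim⟩ := hL
  obtain ⟨n, hτK, hμn, hnL⟩ := ((hτ0.eventually_lt_const (hl K)).and
    ((hlim.eventually_const_lt hμL).and (hlim.eventually_lt_const (lt_add_one L)))).exists
  obtain ⟨k, hKk, hmk, hkl⟩ := h.exists_le_of_mem (hτ n).1 (hτ n).2 hτK.le
  rcases le_or_gt (s n) (l k) with hsl | hls
  · have : s n / τ n ≤ l k / m (k + 1) :=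
      div_le_div₀ (hl k).le hsl (h.1 (k + 1)).right_pos hmk
    linarith [(hK k hKk).1]
  · have hjump := (hK k hKk).2 (s n) (hs n) hls
    rw [div_lt_iff₀ (hτ n).2] at hnL
    nlinarith

theorem forall_ne_of_right_succ_le_of_lt_left {N k₀ : ℕ} (hl : AntitoneOn l {n | N ≤ n})
    (hlm : ∀ k, l k < m k) (hk₀ : N ≤ k₀) {x : ℝ} (hmx : m (k₀ + 1) ≤ x) (hxl : x < l k₀)
    (hsmall : ∀ k < N, x < l k) (k : ℕ) : x ≠ l k := by
  rcases lt_or_ge k N with hkN | hNk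
  · exact (hsmall k hkN).ne
  rcases le_or_gt k k₀ with hkk₀ | hk₀k
  · exact (hxl.trans_le (hl hNk hk₀ hkk₀)).ne
  · exact ((hl (hk₀.trans k₀.le_succ) hNk hk₀k).trans_lt ((hlm _).trans_le hmx)).ne'

theorem IsUniversal.eventually_exists_eq (h : IsUniversal E l m) {a b : ℕ → ℝ}
    (hgap : ∀ᶠ n in atTop, IsGapComponent E (a n) (b n)) (hdec : AlmostDecreasing a)
    (ha : Tendsto a atTop (𝓝 0)) (hratio : Tendsto (fun n => (b n - a n) / b n) atTop (𝓝 1)) :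
    ∀ᶠ n in atTop, ∃ k, a n = l k := by
  obtain ⟨N, hN⟩ := exists_memIE_of_eventually hgap hdec ha hratio
  obtain ⟨N₁, f, hf⟩ := h.2 _ _ hN
  filter_upwards [eventually_ge_atTop N₁, eventually_ge_atTop N] with n hn₁ hn
  exact ⟨f n, by simpa only [max_eq_left hn] using hf n hn₁⟩

/-- If `l_k > r m_{k+1}` infinitely often with `r > ratioSup E`, a point `e` of `E` just right of
`m_{k+1}` still has `C e < l_k` for some `C ∈ (ratioSup E, r)`; the gap built at scale `C e` then
has its left end in `[m_{k+1}, l_k)`, so it is not one of the `l`'s. -/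
theorem Mlim_le_ratioSup (hE : IsAccAtZero E) (h : IsUniversal E l m) :
    Mlim l m ≤ ratioSup E := by
  by_contra! hlt
  obtain ⟨r, -, hr, hrM⟩ := ENNReal.lt_iff_exists_real_btwn.mp hlt
  obtain ⟨C, -, hC, hCr⟩ := ENNReal.lt_iff_exists_real_btwn.mp hr
  have hCr : C < r := (ENNReal.ofReal_lt_ofReal_iff'.mp hCr).1
  have hC1 : 1 < C := lt_of_ratioSup_lt (one_mem_ratioLimits hE) hC
  have hIE := h.1
  have hm : ∀ k, 0 < m k := fun k => (hIE.1 k).right_pos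
  have hl : ∀ k, 0 < l k := fun k => (hIE.1 k).left_pos hE
  have hfreq : ∃ᶠ k in atTop, r * m (k + 1) < l k :=
    (frequently_lt_of_lt_limsup (by isBoundedDefault) hrM).mono fun k hk =>
      (lt_div_iff₀ (hm _)).mp (ENNReal.ofReal_lt_ofReal_iff'.mp hk).1
  obtain ⟨N₀, hN₀⟩ := hIE.2.1.exists_antitoneOn
  obtain ⟨φ, hφ, hφ'⟩ := extraction_of_frequently_atTop
    (hfreq.and_eventually (eventually_ge_atTop N₀))
  choose e he hme heC using fun i => (hIE.1 (φ i + 1)).exists_mem_mul_lt (one_pos.trans hC1)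
    ((mul_lt_mul_of_pos_right hCr (hm _)).trans (hφ' i).1)
  have he_pos : ∀ i, e i ∈ E ∧ 0 < e i := fun i => ⟨he i, (hm _).trans_le (hme i)⟩
  have he0 : Tendsto e atTop (𝓝 0) :=
    squeeze_zero (fun i => (he_pos i).2.le)
      (fun i => ((le_mul_of_one_le_left (he_pos i).2.le hC1.le).trans_lt (heC i)).le)
      (hIE.2.2.1.comp hφ.tendsto_atTop)
  set p := fun i => lowerGapEnd E (C * e i)
  have hp := fun i => lowerGapEnd_mul_mem_Icc (he i) (he_pos i).2.le hC1.le
  have hp0 : Tendsto p atTop (𝓝 0) := tendsto_lowerGapEnd_mul hC1.le he_pos he0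
  have hp_ne : ∀ᶠ i in atTop, ∀ k, p i ≠ l k := by
    filter_upwards [(eventually_all_finset (Finset.range N₀)).2 fun k _ =>
      hp0.eventually_lt_const (hl k)] with i hi
    exact forall_ne_of_right_succ_le_of_lt_left hN₀ (fun k => (hIE.1 k).2.1) (hφ' i).2
      ((hme i).trans (hp i).1) ((hp i).2.trans_lt (heC i)) fun k hk => hi k (Finset.mem_range.2 hk)
  have hp_dec : AlmostDecreasing p := Eventually.of_forall fun i =>
    calc p (i + 1) ≤ C * e (i + 1) := (hp _).2
      _ ≤ l (φ i + 1) := ((heC _).trans_le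
          (hN₀ ((hφ' i).2.trans (φ i).le_succ) ((hφ' _).2) (hφ (i.lt_succ_self)))).le
      _ ≤ p i := ((hIE.1 _).2.1.le.trans (hme i)).trans (hp i).1
  obtain ⟨n, hpn, k, hk⟩ := (hp_ne.and (h.eventually_exists_eq
    (eventually_isGapComponent_gapEnds hC hC1 he_pos he0) hp_dec hp0
    (tendsto_gapEnds_ratio hC hC1 he_pos he0))).exists
  exact hpn k hk

end UniversalGaps

/-- Theorem 4.4.5. -/
theorem stmt15 {X : Type*} [MetricSpace X] (p : X)
    (hp : p ∈ closure ({p}ᶜ : Set X)) :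
    ((RstarX p < ⊤ ↔ 0 < RlowX p) ∧
      (RstarX p < ⊤ ↔ CSP {t : ℝ | ∃ x : X, dist x p = t})) ∧
      (RstarX p < ⊤ →
        ∀ l m : ℕ → ℝ, IsUniversal {t : ℝ | ∃ x : X, dist x p = t} l m →
          RstarX p = Mlim l m ∧ RlowX p = 1 / Mlim l m) := by
  have hE0 : ∀ e ∈ {t : ℝ | ∃ x : X, dist x p = t}, 0 ≤ e := by
    rintro _ ⟨x, rfl⟩
    exact dist_nonneg
  have hE := isAccAtZero_dist hp
  rw [RlowX_eq_ratioInf, ratioInf_eq_inv_ratioSup, RstarX_eq_ratioSup]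
  refine ⟨⟨lt_top_iff_ne_top.trans ENNReal.inv_pos.symm,
    csp_of_ratioSup_lt_top hE0 hE, ratioSup_lt_top_of_csp⟩, fun _ l m hlm => ?_⟩
  have hM := le_antisymm (ratioSup_le_Mlim hE hlm.1) (Mlim_le_ratioSup hE hlm)
  exact ⟨hM, by rw [hM, one_div]⟩
end

section
/- Let E ⊆ [0,∞) be strongly porous at 0 with 0 an accumulation point of E. Then E is completely strongly porous at 0 if and only if there is a universal L̃ ∈ Ĩ_Eᵈ with M(L̃) < ∞. -/
open Filter Topology Set
open scoped ENNReal

/-- `λ(E,0,h)`: the length of the largest open subinterval of `(0,h)` missing `E`. -/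
noncomputable def lambdaGap (E : Set ℝ) (h : ℝ) : ℝ :=
  sSup {l : ℝ | ∃ a b : ℝ, 0 ≤ a ∧ a < b ∧ b ≤ h ∧ Ioo a b ∩ E = ∅ ∧ l = b - a}

/-- `E` is strongly porous at `0`: `p⁺(E,0) = limsup_{h→0⁺} λ(E,0,h)/h = 1`. -/
def StronglyPorousAtZero (E : Set ℝ) : Prop :=
  limsup (fun h => lambdaGap E h / h) (𝓝[>] (0 : ℝ)) = 1


/-!
Call a component `(a, b)` of `[0, ∞) \ E` `M`-wide if `b ≥ M a`.

(⇐) If `lₖ ≤ C mₖ₊₁` eventually, each `τ ∈ E` near `0` is caught between consecutive gaps,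
`mₖ₊₁ ≤ τ ≤ lₖ`, so taking for every `τₙ` the gap `(lₖ, mₖ)` just above it gives a sequence in
`Ĩ_Eᵈ` with `τₙ ≤ lₖ ≤ C τₙ`.

(⇒) First, there is an `M` such that `M`-wide gaps near `0` are arbitrarily wide: otherwise the
points of `E` just below wide but boundedly wide gaps form a sequence `τ̃` whose only candidate
gaps `(aₙ, bₙ)` with `aₙ ≍ τₙ` are those boundedly wide gaps. Left endpoints of `M`-wide gaps are
`M`-separated, so they can be listed from the top down as `l₀ > l₁ > ⋯`; since every sequence in
`Ĩ_Eᵈ` is eventually `M`-wide, this list is universal. If `lₚ / mₚ₊₁` were unbounded, `E` would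
have points deep inside `(mₚ₊₁, lₚ)` (an `E`-free stretch there would be a further wide gap), and
no sequence in `Ĩ_Eᵈ` could follow them.
-/
theorem frequently_mem_nhdsGT_zero {E : Set ℝ} (hE : E ⊆ Ici 0)
    (hacc : (0 : ℝ) ∈ closure (E \ {0})) : ∃ᶠ x in 𝓝[>] (0 : ℝ), x ∈ E :=
  frequently_nhdsWithin_iff.2 <| (mem_closure_iff_frequently.1 hacc).mono fun _ hx =>
    ⟨hx.1, (hE hx.1).lt_of_ne (Ne.symm hx.2)⟩

theorem Filter.Frequently.exists_mem_Ioo {E : Set ℝ} (hE0 : ∃ᶠ x in 𝓝[>] (0 : ℝ), x ∈ E)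
    {ε : ℝ} (hε : 0 < ε) : ∃ e ∈ E, e ∈ Ioo 0 ε :=
  (hE0.and_eventually (Ioo_mem_nhdsGT hε)).exists

namespace IsGapComponent

variable {E : Set ℝ} {a b α β x : ℝ}

theorem notMem (h : IsGapComponent E a b) (hx : x ∈ E) : x ∉ Ioo a b :=
  fun hx' => (eq_empty_iff_forall_notMem.1 h.2.2.1 x) ⟨hx', hx⟩

theorem le_left_of_mem (h : IsGapComponent E a b) (hx : x ∈ E) (hxb : x < b) : x ≤ a :=
  not_lt.1 fun hax => h.notMem hx ⟨hax, hxb⟩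

theorem right_le_of_mem (h : IsGapComponent E a b) (hx : x ∈ E) (hax : a < x) : b ≤ x :=
  not_lt.1 fun hxb => h.notMem hx ⟨hax, hxb⟩

theorem pos (hE0 : ∃ᶠ x in 𝓝[>] (0 : ℝ), x ∈ E) (h : IsGapComponent E a b) : 0 < a := by
  refine h.1.lt_of_ne fun ha => ?_
  obtain ⟨e, he, he0, heb⟩ := hE0.exists_mem_Ioo (h.1.trans_lt h.2.1)
  exact h.notMem he ⟨ha ▸ he0, heb⟩

theorem exists_mem_Ioc (h : IsGapComponent E a b) {c : ℝ} (hc : 0 ≤ c) (hca : c < a) :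
    ∃ x ∈ E, x ∈ Ioc c a := by
  by_contra! hno
  have hfree : Ioo c b ∩ E = ∅ := eq_empty_of_forall_notMem fun x ⟨⟨hcx, hxb⟩, hx⟩ =>
    hno x hx ⟨hcx, h.le_left_of_mem hx hxb⟩
  exact hca.ne (h.2.2.2 c b hc hca.le le_rfl hfree).1

theorem eq_of_le_of_lt (h : IsGapComponent E a b) (h' : IsGapComponent E α β) (ha : a ≤ α)
    (hαb : α < b) : a = α ∧ b = β := by
  have hfree : Ioo a (max b β) ∩ E = ∅ := by
    refine eq_empty_of_forall_notMem fun x ⟨⟨hax, hxb⟩, hx⟩ => ?_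
    by_cases hxb' : x < b
    · exact h.notMem hx ⟨hax, hxb'⟩
    · exact h'.notMem hx ⟨hαb.trans_le (not_lt.1 hxb'), (lt_max_iff.1 hxb).resolve_left hxb'⟩
  have h₁ := h.2.2.2 a (max b β) h.1 le_rfl (le_max_left _ _) hfree
  have h₂ := h'.2.2.2 a (max b β) h.1 ha (le_max_right _ _) hfree
  exact ⟨h₂.1, h₁.2.symm.trans h₂.2⟩

theorem right_le_of_lt (h : IsGapComponent E a b) (h' : IsGapComponent E α β) (ha : a < α) :
    b ≤ α :=
  not_lt.1 fun hαb => ha.ne (h.eq_of_le_of_lt h' ha.le hαb).1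

theorem eq_of_mem_Ioc (h : IsGapComponent E a b) (h' : IsGapComponent E α β) {e : ℝ}
    (he : e ∈ E) (hea : e ∈ Ioc (a / 2) a) (heβ : e < β) (hαβ : 2 * α < β) (hαb : α < b) :
    a = α ∧ b = β := by
  have heα := h'.le_left_of_mem he heβ
  refine h.eq_of_le_of_lt h' (not_lt.1 fun hαa => ?_) hαb
  linarith [h'.right_le_of_lt h hαa, hea.1]

end IsGapComponent

theorem exists_isGapComponent {E : Set ℝ} {α β e : ℝ} (hα : 0 ≤ α) (hαβ : α < β)
    (hfree : Ioo α β ∩ E = ∅) (he : e ∈ E) (hβe : β ≤ e) :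
    ∃ a b, IsGapComponent E a b ∧ a ≤ α ∧ β ≤ b := by
  set L := insert 0 (E ∩ Iic α)
  set R := E ∩ Ici β
  have hL : BddAbove L := ⟨α, by rintro x (rfl | ⟨-, hx⟩); exacts [hα, hx]⟩
  have hR : R.Nonempty := ⟨e, he, hβe⟩
  have hαL : sSup L ≤ α :=
    csSup_le (insert_nonempty _ _) (by rintro x (rfl | ⟨-, hx⟩); exacts [hα, hx])
  have hβR : β ≤ sInf R := le_csInf hR fun x hx => hx.2
  have hnotL : ∀ x ∈ E, sSup L < x → α < x := fun x hx hLx =>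
    not_le.1 fun hxα => hLx.not_ge (le_csSup hL (mem_insert_of_mem _ ⟨hx, hxα⟩))
  have hnotR : ∀ x ∈ E, x < sInf R → x < β := fun x hx hxR =>
    not_le.1 fun hβx => hxR.not_ge (csInf_le ⟨β, fun _ hy => hy.2⟩ ⟨hx, hβx⟩)
  refine ⟨sSup L, sInf R, ⟨le_csSup hL (mem_insert _ _), hαL.trans_lt (hαβ.trans_le hβR), ?_,
    fun a' b' ha' ha'L hRb' hfree' => ⟨?_, ?_⟩⟩, hαL, hβR⟩
  · refine eq_empty_of_forall_notMem fun x ⟨⟨hLx, hxR⟩, hx⟩ => ?_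
    exact (eq_empty_iff_forall_notMem.1 hfree x) ⟨⟨hnotL x hx hLx, hnotR x hx hxR⟩, hx⟩
  · refine ha'L.antisymm (not_lt.1 fun ha'L => ?_)
    obtain ⟨x, hxL, ha'x⟩ := exists_lt_of_lt_csSup (insert_nonempty _ _) ha'L
    rcases hxL with rfl | ⟨hx, hxα⟩
    · exact ha'x.not_ge ha'
    · exact (eq_empty_iff_forall_notMem.1 hfree' x)
        ⟨⟨ha'x, (hxα.trans_lt hαβ).trans_le (hβR.trans hRb')⟩, hx⟩
  · refine (hRb'.antisymm (not_lt.1 fun hRb' => ?_)).symm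
    obtain ⟨x, ⟨hx, hβx⟩, hxb'⟩ := exists_lt_of_csInf_lt hR hRb'
    exact (eq_empty_iff_forall_notMem.1 hfree' x)
      ⟨⟨ha'L.trans_lt ((hαL.trans_lt hαβ).trans_le hβx), hxb'⟩, hx⟩

theorem tendsto_sub_div_self_iff_s16 {a b : ℕ → ℝ} (hb : ∀ n, b n ≠ 0) :
    Tendsto (fun n => (b n - a n) / b n) atTop (𝓝 1) ↔
      Tendsto (fun n => a n / b n) atTop (𝓝 0) := by
  have h : (fun n => (b n - a n) / b n) = fun n => 1 - a n / b n := by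
    ext n; rw [sub_div, div_self (hb n)]
  rw [h]
  constructor <;> intro h' <;> simpa using (tendsto_const_nhds (x := (1 : ℝ))).sub h'

namespace MemIE

variable {E : Set ℝ} {a b : ℕ → ℝ}

theorem right_pos (h : MemIE E a b) (n : ℕ) : 0 < b n :=
  (h.1 n).1.trans_lt (h.1 n).2.1

theorem tendsto_div (h : MemIE E a b) : Tendsto (fun n => a n / b n) atTop (𝓝 0) :=
  (tendsto_sub_div_self_iff_s16 fun n => (h.right_pos n).ne').1 h.2.2.2

theorem eventually_mul_lt (h : MemIE E a b) (K : ℝ) : ∀ᶠ n in atTop, K * a n < b n := by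
  have := (h.tendsto_div.const_mul K).eventually (eventually_lt_nhds (by simp : K * 0 < 1))
  filter_upwards [this] with n hn
  rwa [← mul_div_assoc, div_lt_one (h.right_pos n)] at hn

theorem tendsto_right (hE0 : ∃ᶠ x in 𝓝[>] (0 : ℝ), x ∈ E) (h : MemIE E a b) :
    Tendsto b atTop (𝓝 0) := by
  refine tendsto_order.2 ⟨fun c hc => .of_forall fun n => hc.trans (h.right_pos n), fun ε hε => ?_⟩
  obtain ⟨e, he, he0, heε⟩ := hE0.exists_mem_Ioo hε
  filter_upwards [h.2.2.1.eventually (eventually_lt_nhds he0)] with n hn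
  exact ((h.1 n).right_le_of_mem he hn).trans_lt heε

end MemIE

theorem exists_memE0d {E : Set ℝ} (P : ℕ → ℝ → Prop)
    (hP : ∀ n, ∀ ε > 0, ∃ e ∈ E, 0 < e ∧ e < ε ∧ P n e) :
    ∃ t, MemE0d E t ∧ ∀ n, P n (t n) := by
  have hP' : ∀ (n : ℕ) (x : Ioi (0 : ℝ)), ∃ y : Ioi (0 : ℝ),
      (y : ℝ) ∈ E ∧ (y : ℝ) < x ∧ (y : ℝ) < 1 / (n + 1) ∧ P n y := by
    intro n x
    obtain ⟨e, he, he0, heε, hPe⟩ := hP n (min x (1 / (n + 1))) (lt_min x.2 (by positivity))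
    exact ⟨⟨e, he0⟩, he, heε.trans_le (min_le_left _ _), heε.trans_le (min_le_right _ _), hPe⟩
  choose g hgE hglt hgn hgP using hP'
  -- `t n = g n (v n)` is chosen below `v n`, where `v 0 = 1` and `v (n + 1) = t n`
  let v : ℕ → Ioi (0 : ℝ) := fun n => Nat.rec ⟨1, mem_Ioi.2 one_pos⟩ (fun k x => g k x) n
  refine ⟨fun n => g n (v n), ⟨.of_forall fun n => (hglt (n + 1) (v (n + 1))).le,
    fun n => ⟨hgE n (v n), (mem_Ioi.1 (g n (v n)).2).ne'⟩, ?_⟩, fun n => hgP n (v n)⟩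
  exact squeeze_zero (fun n => (mem_Ioi.1 (g n (v n)).2).le) (fun n => (hgn n (v n)).le)
    tendsto_one_div_add_atTop_nhds_zero_nat

theorem asymp_of_eventually {x y : ℕ → ℝ} (hx : ∀ n, 0 < x n) (hy : ∀ n, 0 < y n) {c₁ c₂ : ℝ}
    (hc₁ : 0 < c₁) (h : ∀ᶠ n in atTop, c₁ * x n ≤ y n ∧ y n ≤ c₂ * x n) : Asymp x y := by
  obtain ⟨B, hB⟩ : BddAbove (range fun n => y n / x n) :=
    (isBoundedUnder_of_eventually_le (h.mono fun n hn =>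
      (div_le_iff₀ (hx n)).2 hn.2)).bddAbove_range
  obtain ⟨B', hB'⟩ : BddAbove (range fun n => x n / y n) :=
    (isBoundedUnder_of_eventually_le (h.mono fun n hn =>
      (div_le_iff₀ (hy n)).2 ((le_inv_mul_iff₀ hc₁).2 hn.1))).bddAbove_range
  have hB : ∀ n, y n ≤ B * x n := fun n => (div_le_iff₀ (hx n)).1 (hB ⟨n, rfl⟩)
  have hB' : ∀ n, x n ≤ B' * y n := fun n => (div_le_iff₀ (hy n)).1 (hB' ⟨n, rfl⟩)
  have hB0 : 0 < B' := pos_of_mul_pos_left ((hx 0).trans_le (hB' 0)) (hy 0).le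
  refine ⟨(B' + 1)⁻¹, B + 1, by positivity, ?_, fun n => ⟨?_, by linarith [hB n, hx n]⟩⟩
  · nlinarith [hB 0, hx 0, hy 0]
  · rw [inv_mul_lt_iff₀ (by positivity)]
    linarith [hB' n, hy n]

theorem exists_le_mul_of_Mlim_lt_top {l m : ℕ → ℝ} (hl : ∀ n, 0 ≤ l n) (hm : ∀ n, 0 < m n)
    (h : Mlim l m < ⊤) : ∃ C : ℝ, 0 ≤ C ∧ ∀ᶠ n in atTop, l n ≤ C * m (n + 1) := by
  obtain ⟨C, hC, -⟩ := ENNReal.lt_iff_exists_nnreal_btwn.1 h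
  refine ⟨C, C.2, (eventually_lt_of_limsup_lt hC).mono fun n hn => ?_⟩
  rw [← div_le_iff₀ (hm _)]
  exact ((ENNReal.ofReal_lt_coe_iff (div_nonneg (hl n) (hm _).le)).1 hn).le

/-- `j n` is the first index `k ≥ N` with `m (k + 1) ≤ t n`. -/
theorem exists_index_seq {m t : ℕ → ℝ} (hm : ∀ k, 0 < m k) (hm0 : Tendsto m atTop (𝓝 0))
    (ht : ∀ n, 0 < t n) (htd : AlmostDecreasing t) (ht0 : Tendsto t atTop (𝓝 0)) (N : ℕ) :
    ∃ j : ℕ → ℕ, Tendsto j atTop atTop ∧ (∀ᶠ n in atTop, j n ≤ j (n + 1)) ∧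
      (∀ n, N ≤ j n) ∧ (∀ n, m (j n + 1) ≤ t n) ∧ ∀ᶠ n in atTop, t n < m (j n) := by
  classical
  have hex : ∀ n, ∃ k, N ≤ k ∧ m (k + 1) ≤ t n := fun n =>
    ((eventually_ge_atTop N).and ((hm0.comp (tendsto_add_atTop_nat 1)).eventually
      (eventually_le_nhds (ht n)))).exists
  refine ⟨fun n => Nat.find (hex n), tendsto_atTop.2 fun J => ?_, ?_,
    fun n => (Nat.find_spec (hex n)).1, fun n => (Nat.find_spec (hex n)).2, ?_⟩
  · have : ∀ᶠ n in atTop, ∀ k ∈ Finset.range J, t n < m (k + 1) :=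
      (eventually_all_finset _).2 fun k _ => ht0.eventually (eventually_lt_nhds (hm _))
    filter_upwards [this] with n hn
    by_contra! hlt
    exact (hn _ (Finset.mem_range.2 hlt)).not_ge (Nat.find_spec (hex n)).2
  · filter_upwards [htd] with n hn
    exact Nat.find_mono fun k hk => ⟨hk.1, hk.2.trans hn⟩
  · filter_upwards [ht0.eventually (eventually_lt_nhds (hm N))] with n hn
    rcases (Nat.find_spec (hex n)).1.eq_or_lt with h | h
    · rwa [← h]
    · have hmin := Nat.find_min (hex n) (show Nat.find (hex n) - 1 < Nat.find (hex n) by omega)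
      rw [Nat.sub_add_cancel (by omega : 1 ≤ Nat.find (hex n))] at hmin
      exact not_le.1 fun h' => hmin ⟨by omega, h'⟩

theorem CSP.of_memIE_of_Mlim_lt_top {E : Set ℝ} (hE : E ⊆ Ici 0)
    (hE0 : ∃ᶠ x in 𝓝[>] (0 : ℝ), x ∈ E) {l m : ℕ → ℝ} (hL : MemIE E l m)
    (hM : Mlim l m < ⊤) : CSP E := by
  obtain ⟨C, hC0, hC⟩ := exists_le_mul_of_Mlim_lt_top (fun n => (hL.1 n).1) hL.right_pos hM
  obtain ⟨N, hN⟩ := eventually_atTop.1 (hL.2.1.and hC)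
  have hlN : AntitoneOn l (Ici N) := antitoneOn_nat_Ici_of_succ_le fun k hk => (hN k hk).1
  intro t ht
  have ht0 : ∀ n, 0 < t n := fun n => (hE (ht.2.1 n).1).lt_of_ne (Ne.symm (ht.2.1 n).2)
  obtain ⟨j, hj, hjmono, hjN, hjt, htj⟩ :=
    exists_index_seq hL.right_pos (hL.tendsto_right hE0) ht0 ht.1 ht.2.2 N
  have hbound : ∀ᶠ n in atTop, 1 * t n ≤ l (j n) ∧ l (j n) ≤ C * t n := by
    filter_upwards [htj] with n hn
    rw [one_mul]
    exact ⟨(hL.1 (j n)).le_left_of_mem (ht.2.1 n).1 hn,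
      (hN _ (hjN n)).2.trans (mul_le_mul_of_nonneg_left (hjt n) hC0)⟩
  refine ⟨fun n => l (j n), fun n => m (j n), ⟨fun n => hL.1 (j n), ?_, ?_, hL.2.2.2.comp hj⟩,
    asymp_of_eventually ht0 (fun n => (hL.1 (j n)).pos hE0) one_pos hbound⟩
  · filter_upwards [hjmono] with n hn
    exact hlN (hjN n) (hjN (n + 1)) hn
  · exact squeeze_zero' (.of_forall fun n => (hL.1 (j n)).1) (hbound.mono fun n hn => hn.2)
      (by simpa using ht.2.2.const_mul C)

theorem CSP.exists_thin {E : Set ℝ} (hE0 : ∃ᶠ x in 𝓝[>] (0 : ℝ), x ∈ E) (h : CSP E) :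
    ∃ M : ℝ, 2 ≤ M ∧ ∀ J : ℝ, ∀ᶠ a in 𝓝 (0 : ℝ), ∀ b, IsGapComponent E a b → M * a ≤ b →
      J * a ≤ b := by
  by_contra! hbad
  have hΘ : ∀ μ : ℕ, ∃ Θ : ℝ, ∀ ε > 0, ∃ a b, IsGapComponent E a b ∧ a < ε ∧
      (μ + 2) * a ≤ b ∧ b < Θ * a := by
    intro μ
    obtain ⟨J, hJ⟩ := hbad (μ + 2) (by linarith [μ.cast_nonneg (α := ℝ)])
    refine ⟨J, fun ε hε => ?_⟩
    obtain ⟨a, ⟨b, hab, hMab, hbJ⟩, haε⟩ := (hJ.and_eventually (eventually_lt_nhds hε)).exists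
    exact ⟨a, b, hab, haε, hMab, hbJ⟩
  choose Θ hΘ using hΘ
  -- every `μ` recurs as `n.unpair.1` for arbitrarily large `n`
  obtain ⟨t, ht, hprobe⟩ := exists_memE0d (E := E) (fun n e => ∃ a b, IsGapComponent E a b ∧
      ((n.unpair.1 : ℝ) + 2) * a ≤ b ∧ b < Θ n.unpair.1 * a ∧ e ∈ Ioc (a / 2) a)
    fun n ε hε => by
      obtain ⟨a, b, hab, haε, hMab, hbΘ⟩ := hΘ n.unpair.1 ε hε
      have ha := hab.pos hE0
      obtain ⟨e, he, hea⟩ := hab.exists_mem_Ioc (by positivity : 0 ≤ a / 2) (by linarith)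
      exact ⟨e, he, by linarith [hea.1], hea.2.trans_lt haε, a, b, hab, hMab, hbΘ, hea⟩
  obtain ⟨A, B, hAB, c₁, c₂, hc₁, hc₂, hA⟩ := h t ht
  set μ := ⌈c₂⌉₊
  set K := max (max 2 c₁⁻¹) (Θ μ)
  obtain ⟨N, hN⟩ := eventually_atTop.1 (hAB.eventually_mul_lt K)
  obtain ⟨a, b, hab, hMab, hbΘ, hea⟩ := hprobe (Nat.pair μ N)
  simp only [Nat.unpair_pair] at hMab hbΘ
  have hKAB := hN _ (Nat.right_le_pair μ N)
  set n := Nat.pair μ N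
  obtain ⟨h₁, h₂⟩ := hA n
  have hα := (hAB.1 n).pos hE0
  have hK2 : 2 ≤ K := (le_max_left _ _).trans (le_max_left _ _)
  have hKc : c₁⁻¹ ≤ K := (le_max_right _ _).trans (le_max_left _ _)
  have hαb : A n < b := by
    have hc₂μ : c₂ ≤ μ := Nat.le_ceil c₂
    have ha : 0 < a := hab.pos hE0
    nlinarith [mul_le_mul_of_nonneg_left hea.2 hc₂.le, mul_le_mul_of_nonneg_right hc₂μ ha.le]
  have heβ : t n < B n := by
    have : t n < c₁⁻¹ * A n := by rwa [lt_inv_mul_iff₀ hc₁]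
    nlinarith
  obtain ⟨rfl, rfl⟩ := hab.eq_of_mem_Ioc (hAB.1 n) (ht.2.1 n).1 hea heβ (by nlinarith) hαb
  nlinarith [le_max_right (max 2 c₁⁻¹) (Θ μ)]

def wideGapStarts (E : Set ℝ) (M : ℝ) : Set ℝ :=
  {a | ∃ b, IsGapComponent E a b ∧ M * a ≤ b}

section WideGaps

variable {E : Set ℝ} {M a c : ℝ}

theorem pos_of_mem_wideGapStarts (hE0 : ∃ᶠ x in 𝓝[>] (0 : ℝ), x ∈ E)
    (ha : a ∈ wideGapStarts E M) : 0 < a :=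
  let ⟨_, hab, _⟩ := ha
  hab.pos hE0

theorem mul_le_of_mem_wideGapStarts (ha : a ∈ wideGapStarts E M) (hc : c ∈ wideGapStarts E M)
    (hac : a < c) : M * a ≤ c :=
  let ⟨_, hab, hMab⟩ := ha
  let ⟨_, hcd, _⟩ := hc
  hMab.trans (hab.right_le_of_lt hcd hac)

theorem exists_isGreatest_wideGapStarts_Iio (hE0 : ∃ᶠ x in 𝓝[>] (0 : ℝ), x ∈ E) (hM : 1 < M)
    {x : ℝ} (hne : (wideGapStarts E M ∩ Iio x).Nonempty) :
    ∃ s, IsGreatest (wideGapStarts E M ∩ Iio x) s := by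
  set S := wideGapStarts E M ∩ Iio x
  have hS : BddAbove S := ⟨x, fun _ h => h.2.le⟩
  obtain ⟨a, ha⟩ := hne
  have hpos : 0 < sSup S := (pos_of_mem_wideGapStarts hE0 ha.1).trans_le (le_csSup hS ha)
  obtain ⟨s, hs, hlt⟩ := exists_lt_of_lt_csSup ⟨a, ha⟩ (div_lt_self hpos hM)
  refine ⟨s, hs, fun c hc => not_lt.1 fun hsc => ?_⟩
  rw [div_lt_iff₀ (by linarith)] at hlt
  linarith [mul_le_of_mem_wideGapStarts hs.1 hc.1 hsc, le_csSup hS hc]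

theorem CSP.exists_mem_wideGapStarts_lt (hE0 : ∃ᶠ x in 𝓝[>] (0 : ℝ), x ∈ E) (h : CSP E)
    (M : ℝ) {δ : ℝ} (hδ : 0 < δ) : ∃ a ∈ wideGapStarts E M, a < δ := by
  obtain ⟨t, ht, -⟩ := exists_memE0d (E := E) (fun _ _ => True) fun _ ε hε =>
    let ⟨e, he, he0, heε⟩ := hE0.exists_mem_Ioo hε
    ⟨e, he, he0, heε, trivial⟩
  obtain ⟨A, B, hAB, -⟩ := h t ht
  obtain ⟨n, hMn, hn⟩ :=
    ((hAB.eventually_mul_lt M).and (hAB.2.2.1.eventually (eventually_lt_nhds hδ))).exists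
  exact ⟨A n, ⟨B n, hAB.1 n, hMn.le⟩, hn⟩

end WideGaps

def IsDescendingEnum (S : Set ℝ) (l : ℕ → ℝ) : Prop :=
  IsGreatest (S ∩ Iio 1) (l 0) ∧ ∀ n, IsGreatest (S ∩ Iio (l n)) (l (n + 1))

namespace IsDescendingEnum

variable {S : Set ℝ} {l : ℕ → ℝ}

theorem exists_of_forall_isGreatest (hS : ∀ x > 0, ∃ s, IsGreatest (S ∩ Iio x) s)
    (hS0 : S ⊆ Ioi 0) : ∃ l, IsDescendingEnum S l := by
  have : ∀ x : Ioi (0 : ℝ), ∃ s : Ioi (0 : ℝ), IsGreatest (S ∩ Iio x) s := fun x =>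
    let ⟨s, hs⟩ := hS x x.2
    ⟨⟨s, hS0 hs.1.1⟩, hs⟩
  choose g hg using this
  refine ⟨fun n => g^[n + 1] ⟨1, mem_Ioi.2 one_pos⟩, hg _, fun n => ?_⟩
  simpa only [Function.iterate_succ_apply' g (n + 1)] using hg _

theorem mem (h : IsDescendingEnum S l) (n : ℕ) : l n ∈ S := by
  cases n
  exacts [h.1.1.1, (h.2 _).1.1]

theorem succ_lt (h : IsDescendingEnum S l) (n : ℕ) : l (n + 1) < l n :=
  (h.2 n).1.2

theorem le_succ (h : IsDescendingEnum S l) {n : ℕ} {w : ℝ} (hw : w ∈ S) (hwl : w < l n) :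
    w ≤ l (n + 1) :=
  (h.2 n).2 ⟨hw, hwl⟩

theorem exists_eq (h : IsDescendingEnum S l) (hl0 : Tendsto l atTop (𝓝 0)) {w : ℝ}
    (hw : w ∈ S) (hw0 : 0 < w) (hw1 : w < 1) : ∃ n, l n = w := by
  by_contra! hne
  have hlt : ∀ n, w < l n := by
    intro n
    induction n with
    | zero => exact (h.1.2 ⟨hw, hw1⟩).lt_of_ne (hne 0).symm
    | succ n ih => exact (h.le_succ hw ih).lt_of_ne (hne _).symm
  obtain ⟨n, hn⟩ := (hl0.eventually (eventually_lt_nhds hw0)).exists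
  exact lt_asymm hn (hlt n)

variable {E : Set ℝ} {M : ℝ} {m : ℕ → ℝ}

theorem tendsto_zero (hE0 : ∃ᶠ x in 𝓝[>] (0 : ℝ), x ∈ E) (hM : 2 ≤ M)
    (h : IsDescendingEnum (wideGapStarts E M) l) : Tendsto l atTop (𝓝 0) := by
  have hpos : ∀ n, 0 < l n := fun n => pos_of_mem_wideGapStarts hE0 (h.mem n)
  have hhalf : ∀ n, l (n + 1) ≤ 2⁻¹ * l n := fun n => by
    have := mul_le_of_mem_wideGapStarts (h.mem (n + 1)) (h.mem n) (h.succ_lt n)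
    nlinarith [hpos (n + 1)]
  refine squeeze_zero (fun n => (hpos n).le)
    (fun n => le_geom (by norm_num) n fun k _ => hhalf k) ?_
  simpa using (tendsto_pow_atTop_nhds_zero_of_lt_one (by norm_num : (0 : ℝ) ≤ 2⁻¹)
    (by norm_num)).mul_const (l 0)

theorem memIE (hE0 : ∃ᶠ x in 𝓝[>] (0 : ℝ), x ∈ E)
    (hthin : ∀ J : ℝ, ∀ᶠ a in 𝓝 (0 : ℝ), ∀ b, IsGapComponent E a b → M * a ≤ b → J * a ≤ b)
    (h : IsDescendingEnum (wideGapStarts E M) l) (hl0 : Tendsto l atTop (𝓝 0))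
    (hm : ∀ n, IsGapComponent E (l n) (m n) ∧ M * l n ≤ m n) : MemIE E l m := by
  have hlpos : ∀ n, 0 < l n := fun n => (hm n).1.pos hE0
  have hmpos : ∀ n, 0 < m n := fun n => (hlpos n).trans (hm n).1.2.1
  refine ⟨fun n => (hm n).1, .of_forall fun n => (h.succ_lt n).le, hl0,
    (tendsto_sub_div_self_iff_s16 fun n => (hmpos n).ne').2 (tendsto_order.2 ⟨fun c hc =>
      .of_forall fun n => hc.trans (div_pos (hlpos n) (hmpos n)), fun ε hε => ?_⟩)⟩
  filter_upwards [hl0.eventually (hthin (2 / ε))] with n hn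
  have h2 : 2 * l n ≤ ε * m n := by
    have := mul_le_mul_of_nonneg_left (hn (m n) (hm n).1 (hm n).2) hε.le
    rwa [← mul_assoc, mul_div_cancel₀ _ hε.ne'] at this
  rw [div_lt_iff₀ (hmpos n)]
  linarith [hlpos n]

theorem isUniversal (hE0 : ∃ᶠ x in 𝓝[>] (0 : ℝ), x ∈ E)
    (h : IsDescendingEnum (wideGapStarts E M) l) (hl0 : Tendsto l atTop (𝓝 0))
    (hL : MemIE E l m) : IsUniversal E l m := by
  refine ⟨hL, fun a b hab => ?_⟩
  obtain ⟨N, hN⟩ := eventually_atTop.1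
    ((hab.eventually_mul_lt M).and (hab.2.2.1.eventually (eventually_lt_nhds one_pos)))
  have : ∀ n, ∃ k, N ≤ n → a n = l k := fun n => by
    by_cases hn : N ≤ n
    · obtain ⟨k, hk⟩ := h.exists_eq hl0 ⟨b n, hab.1 n, (hN n hn).1.le⟩ ((hab.1 n).pos hE0)
        (hN n hn).2
      exact ⟨k, fun _ => hk.symm⟩
    · exact ⟨0, fun h' => absurd h' hn⟩
  choose f hf using this
  exact ⟨N, f, hf⟩

theorem exists_mem_Ioo (hE0 : ∃ᶠ x in 𝓝[>] (0 : ℝ), x ∈ E) (hM : 1 < M)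
    (h : IsDescendingEnum (wideGapStarts E M) l) (hm : ∀ n, IsGapComponent E (l n) (m n))
    {n : ℕ} {x : ℝ} (hx : m (n + 1) ≤ x) (hxl : M * x < l n) : ∃ e ∈ E, e ∈ Ioo x (M * x) := by
  by_contra! hno
  have hx0 : 0 < x := (((hm (n + 1)).pos hE0).trans (hm (n + 1)).2.1).trans_le hx
  have hxM : x < M * x := lt_mul_left hx0 hM
  have hfree : Ioo x (M * x) ∩ E = ∅ :=
    eq_empty_of_forall_notMem fun y ⟨hy, hyE⟩ => hno y hyE hy
  obtain ⟨e, he, hMxe, -⟩ := (hm n).exists_mem_Ioc (by positivity) hxl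
  obtain ⟨a, b, hab, hax, hMxb⟩ := exists_isGapComponent hx0.le hxM hfree he hMxe.le
  have ha : a ≤ l (n + 1) :=
    h.le_succ ⟨b, hab, (mul_le_mul_of_nonneg_left hax (by linarith)).trans hMxb⟩
      (hax.trans_lt (hxM.trans hxl))
  have hb := (hab.eq_of_le_of_lt (hm (n + 1)) ha (by linarith [(hm (n + 1)).2.1])).2
  linarith

theorem exists_memE0d_between (hE0 : ∃ᶠ x in 𝓝[>] (0 : ℝ), x ∈ E) (hM : 1 < M)
    (h : IsDescendingEnum (wideGapStarts E M) l) (hm : ∀ n, IsGapComponent E (l n) (m n))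
    (hl0 : Tendsto l atTop (𝓝 0)) (hfreq : ∀ X : ℝ, ∃ᶠ p in atTop, X * m (p + 1) < l p) :
    ∃ t, MemE0d E t ∧ ∀ n : ℕ, ∃ p, (n + 1) * m (p + 1) < t n ∧ (n + 1) * t n < l p := by
  refine exists_memE0d (fun n e => ∃ p, (n + 1) * m (p + 1) < e ∧ (n + 1) * e < l p)
    fun n ε hε => ?_
  set C : ℝ := n + 1
  have hC : 1 ≤ C := by simp [C]
  obtain ⟨p, hp, hpε⟩ :=
    ((hfreq (C ^ 2 * M)).and_eventually (hl0.eventually (eventually_lt_nhds hε))).exists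
  have hm0 : 0 < m (p + 1) := ((hm (p + 1)).pos hE0).trans (hm (p + 1)).2.1
  have hCM : M * (C * m (p + 1)) ≤ C ^ 2 * M * m (p + 1) := by
    have : 0 ≤ (C ^ 2 - C) * (M * m (p + 1)) :=
      mul_nonneg (by nlinarith) (mul_nonneg (by linarith) hm0.le)
    linarith
  obtain ⟨e, he, hxe, heM⟩ := h.exists_mem_Ioo hE0 hM hm (x := C * m (p + 1)) (by nlinarith)
    (by linarith)
  have hCe : C * e < l p := by nlinarith
  exact ⟨e, he, by nlinarith, by nlinarith, p, hxe, hCe⟩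

theorem Mlim_lt_top (hE0 : ∃ᶠ x in 𝓝[>] (0 : ℝ), x ∈ E) (hCSP : CSP E) (hM : 1 < M)
    (h : IsDescendingEnum (wideGapStarts E M) l) (hm : ∀ n, IsGapComponent E (l n) (m n))
    (hl0 : Tendsto l atTop (𝓝 0)) : Mlim l m < ⊤ := by
  by_contra hMt
  have hfreq : ∀ X : ℝ, ∃ᶠ p in atTop, X * m (p + 1) < l p := fun X =>
    (frequently_lt_of_lt_limsup (by isBoundedDefault) (b := ENNReal.ofReal X)
      (not_lt_top_iff.1 hMt ▸ ENNReal.ofReal_lt_top)).mono fun p hp => by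
      rw [← lt_div_iff₀ (((hm (p + 1)).pos hE0).trans (hm (p + 1)).2.1)]
      exact (ENNReal.ofReal_lt_ofReal_iff'.1 hp).1
  obtain ⟨t, ht, hfar⟩ := h.exists_memE0d_between hE0 hM hm hl0 hfreq
  obtain ⟨A, B, hAB, c₁, c₂, hc₁, hc₂, hA⟩ := hCSP t ht
  obtain ⟨n, hMn, hn⟩ := ((hAB.eventually_mul_lt M).and
    (tendsto_natCast_atTop_atTop.eventually_ge_atTop (max c₂ c₁⁻¹))).exists
  obtain ⟨p, hp₁, hp₂⟩ := hfar n
  have hm0 : 0 < m (p + 1) := ((hm (p + 1)).pos hE0).trans (hm (p + 1)).2.1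
  have hmA : m (p + 1) < A n := by
    have : 1 < c₁ * (n + 1) := by
      rw [← inv_mul_lt_iff₀ hc₁, mul_one]
      linarith [le_max_right c₂ c₁⁻¹]
    nlinarith [(hA n).1]
  have hAl : A n < l p := by nlinarith [(hA n).2, le_max_left c₂ c₁⁻¹, ht.2.1 n]
  linarith [h.le_succ ⟨B n, hAB.1 n, hMn.le⟩ hAl, (hm (p + 1)).2.1]

end IsDescendingEnum

theorem CSP.exists_isUniversal_Mlim_lt_top {E : Set ℝ} (hE0 : ∃ᶠ x in 𝓝[>] (0 : ℝ), x ∈ E)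
    (h : CSP E) : ∃ l m : ℕ → ℝ, IsUniversal E l m ∧ Mlim l m < ⊤ := by
  obtain ⟨M, hM, hthin⟩ := h.exists_thin hE0
  obtain ⟨l, hl⟩ := IsDescendingEnum.exists_of_forall_isGreatest (S := wideGapStarts E M)
    (fun x hx => exists_isGreatest_wideGapStarts_Iio hE0 (by linarith)
      (h.exists_mem_wideGapStarts_lt hE0 M hx))
    fun a ha => pos_of_mem_wideGapStarts hE0 ha
  choose m hm using hl.mem
  have hl0 := hl.tendsto_zero hE0 hM
  exact ⟨l, m, hl.isUniversal hE0 hl0 (hl.memIE hE0 hthin hl0 hm),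
    hl.Mlim_lt_top hE0 h (by linarith) (fun n => (hm n).1) hl0⟩

theorem stmt16_general (E : Set ℝ) (hE : E ⊆ Ici 0)
    (hacc : (0 : ℝ) ∈ closure (E \ {0})) :
    CSP E ↔ ∃ l m : ℕ → ℝ, IsUniversal E l m ∧ Mlim l m < ⊤ := by
  have hE0 := frequently_mem_nhdsGT_zero hE hacc
  exact ⟨fun h => h.exists_isUniversal_Mlim_lt_top hE0,
    fun ⟨_, _, hL, hM⟩ => CSP.of_memIE_of_Mlim_lt_top hE hE0 hL.1 hM⟩

/-- Theorem 2.5. -/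
theorem stmt16 (E : Set ℝ) (hE : E ⊆ Ici 0) (hsp : StronglyPorousAtZero E)
    (hacc : (0 : ℝ) ∈ closure (E \ {0})) :
    CSP E ↔ ∃ l m : ℕ → ℝ, IsUniversal E l m ∧ Mlim l m < ⊤ :=
  stmt16_general E hE hacc
end

section
/- Let E ⊆ [0,∞) and let τ̃ = (τ_n) ∈ Ẽ₀ᵈ. Then E is τ̃-strongly porous at 0 if and only if there is a constant k ∈ (1,∞) such that for every K ∈ (k,∞) there exists N₁(K) ∈ ℕ with (kτ_n, Kτ_n) ∩ E = ∅ for every n ≥ N₁(K). -/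
open Filter Topology Set
open scoped ENNReal

/-! If `((aₙ, bₙ))` are gaps of `E` with `aₙ ≍ τₙ` and `aₙ / bₙ → 0`, then `τₙ = o(bₙ)`; so for
`k` above the upper constant of `aₙ ≍ τₙ`, the interval `(kτₙ, Kτₙ)` lies in `(aₙ, bₙ)` for
large `n`. Conversely, once `(kτₙ, (k+1)τₙ)` misses `E`, the gap containing it is
`(sup (E ∩ (-∞, kτₙ]), inf (E ∩ [(k+1)τₙ, ∞)))`: its left end lies in `[τₙ, kτₙ]` and its
right end eventually exceeds every `Kτₙ`. Replacing `τₙ` by `τ_{max n N}` makes these gaps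
exist for every `n` without changing the class of `τ̃` under `≍`. -/

open Asymptotics

lemma MemE0d.pos {E : Set ℝ} {τ : ℕ → ℝ} (hE : E ⊆ Ici 0) (hτ : MemE0d E τ) (n : ℕ) :
    0 < τ n :=
  (hE (hτ.2.1 n).1).lt_of_ne' (hτ.2.1 n).2

lemma MemE0d.comp_max {E : Set ℝ} {τ : ℕ → ℝ} (hτ : MemE0d E τ) (N : ℕ) :
    MemE0d E fun n => τ (max n N) := by
  obtain ⟨hdec, hmem, hlim⟩ := hτ
  refine ⟨?_, fun n => hmem _, hlim.comp (tendsto_atTop_mono (le_max_left · N) tendsto_id)⟩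
  filter_upwards [hdec, eventually_ge_atTop N] with n hn hNn
  simpa [max_eq_left hNn, max_eq_left (hNn.trans n.le_succ)] using hn

lemma asymp_iff_isTheta {x y : ℕ → ℝ} (hx : ∀ n, 0 < x n) (hy : ∀ n, 0 < y n) :
    Asymp x y ↔ x =Θ[atTop] y := by
  have norm_x n : ‖x n‖ = x n := Real.norm_of_nonneg (hx n).le
  have norm_y n : ‖y n‖ = y n := Real.norm_of_nonneg (hy n).le
  constructor
  · rintro ⟨c₁, c₂, hc₁, hc₂, h⟩
    refine ⟨IsBigO.of_bound c₁⁻¹ (Eventually.of_forall fun n => ?_),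
      IsBigO.of_bound c₂ (Eventually.of_forall fun n => ?_)⟩
    · rw [norm_x, norm_y, inv_mul_eq_div, le_div_iff₀ hc₁, mul_comm]
      exact (h n).1.le
    · rw [norm_x, norm_y]
      exact (h n).2.le
  · rintro ⟨hxy, hyx⟩
    obtain ⟨C₁, hC₁⟩ := (isBigO_nat_atTop_iff fun n h => absurd h (hy n).ne').1 hxy
    obtain ⟨C₂, hC₂⟩ := (isBigO_nat_atTop_iff fun n h => absurd h (hx n).ne').1 hyx
    refine ⟨(|C₁| + 1)⁻¹, |C₂| + 1, by positivity, by positivity, fun n => ⟨?_, ?_⟩⟩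
    · rw [inv_mul_lt_iff₀ (by positivity)]
      nlinarith [norm_x n ▸ norm_y n ▸ hC₁ n, le_abs_self C₁, hy n]
    · nlinarith [norm_x n ▸ norm_y n ▸ hC₂ n, le_abs_self C₂, hx n]

lemma tendsto_sub_div_self_iff_isLittleO {α : Type*} {l : Filter α} {a b : α → ℝ}
    (hb : ∀ x, b x ≠ 0) :
    Tendsto (fun x => (b x - a x) / b x) l (𝓝 1) ↔ a =o[l] b := by
  simp only [sub_div, div_self (hb _), isLittleO_iff_tendsto fun x h => absurd h (hb x)]
  constructor <;> intro h <;> simpa using (tendsto_const_nhds (x := (1 : ℝ))).sub h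

lemma isLittleO_iff_forall_eventually_mul_le {α : Type*} {l : Filter α} {f g : α → ℝ}
    (hf : ∀ x, 0 ≤ f x) (hg : ∀ x, 0 ≤ g x) :
    f =o[l] g ↔ ∀ K, 0 < K → ∀ᶠ x in l, K * f x ≤ g x := by
  simp only [isLittleO_iff, Real.norm_of_nonneg (hf _), Real.norm_of_nonneg (hg _)]
  refine ⟨fun h K hK => ?_, fun h c hc => ?_⟩
  · filter_upwards [h (inv_pos.2 hK)] with x hx
    rwa [← le_inv_mul_iff₀ hK]
  · filter_upwards [h c⁻¹ (inv_pos.2 hc)] with x hx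
    rwa [inv_mul_le_iff₀ hc] at hx

section Gaps

variable {E : Set ℝ} {p q : ℝ}

lemma le_csInf_inter_Ici {r : ℝ} (hpq : p < q) (hq : (E ∩ Ici q).Nonempty)
    (h : Ioo p r ∩ E = ∅) : r ≤ sInf (E ∩ Ici q) :=
  le_csInf hq fun x ⟨hxE, hqx⟩ =>
    not_lt.1 fun hxr => (eq_empty_iff_forall_notMem.1 h) x ⟨⟨hpq.trans_le hqx, hxr⟩, hxE⟩

lemma isGapComponent_csSup_csInf (hE : E ⊆ Ici 0) (hpq : p < q) (hp : (E ∩ Iic p).Nonempty)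
    (hq : (E ∩ Ici q).Nonempty) (h : Ioo p q ∩ E = ∅) :
    IsGapComponent E (sSup (E ∩ Iic p)) (sInf (E ∩ Ici q)) := by
  have hbdd : BddAbove (E ∩ Iic p) := ⟨p, fun x hx => hx.2⟩
  have hsup : sSup (E ∩ Iic p) ≤ p := csSup_le hp fun x hx => hx.2
  have hinf : q ≤ sInf (E ∩ Ici q) := le_csInf hq fun x hx => hx.2
  refine ⟨?_, hsup.trans_lt (hpq.trans_le hinf), ?_, fun a' b' _ ha' hb' h' => ⟨?_, ?_⟩⟩
  · obtain ⟨x, hx⟩ := hp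
    exact (hE hx.1).trans (le_csSup hbdd hx)
  · refine eq_empty_iff_forall_notMem.2 fun x ⟨⟨hax, hxb⟩, hxE⟩ => ?_
    have hpx : p < x := not_le.1 fun hxp => (le_csSup hbdd ⟨hxE, hxp⟩).not_gt hax
    have hqx : q ≤ x :=
      not_lt.1 fun hxq => (eq_empty_iff_forall_notMem.1 h) x ⟨⟨hpx, hxq⟩, hxE⟩
    exact hxb.not_ge (csInf_le ⟨q, fun _ hy => hy.2⟩ ⟨hxE, hqx⟩)
  · refine le_antisymm ha' (csSup_le hp fun x hx => not_lt.1 fun hxa => ?_)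
    exact (eq_empty_iff_forall_notMem.1 h') x
      ⟨⟨hxa, hx.2.trans_lt (hpq.trans_le (hinf.trans hb'))⟩, hx.1⟩
  · refine le_antisymm (le_csInf hq fun x hx => not_lt.1 fun hxb => ?_) hb'
    exact (eq_empty_iff_forall_notMem.1 h') x
      ⟨⟨(ha'.trans hsup).trans_lt (hpq.trans_le hx.2), hxb⟩, hx.1⟩

end Gaps

lemma TauStronglyPorous.congr' {E : Set ℝ} {σ τ : ℕ → ℝ} (h : TauStronglyPorous E σ)
    (hσ : ∀ n, 0 < σ n) (hτ : ∀ n, 0 < τ n) (hστ : σ =ᶠ[atTop] τ) : TauStronglyPorous E τ := by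
  obtain ⟨a, b, hab, c₁, c₂, hc₁, hc₂, hc⟩ := h
  have ha n : 0 < a n := (mul_pos hc₁ (hσ n)).trans (hc n).1
  refine ⟨a, b, hab, (asymp_iff_isTheta hτ ha).2 ?_⟩
  exact hστ.symm.trans_isTheta ((asymp_iff_isTheta hσ ha).1 ⟨c₁, c₂, hc₁, hc₂, hc⟩)

lemma TauStronglyPorous.exists_gap {E : Set ℝ} {τ : ℕ → ℝ} (hτ : ∀ n, 0 < τ n)
    (h : TauStronglyPorous E τ) :
    ∃ k : ℝ, 1 < k ∧ ∀ K : ℝ, k < K → ∃ N₁ : ℕ, ∀ n, N₁ ≤ n →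
      Ioo (k * τ n) (K * τ n) ∩ E = ∅ := by
  obtain ⟨a, b, ⟨hgap, -, -, hratio⟩, hasymp⟩ := h
  obtain ⟨c₁, c₂, hc₁, hc₂, hc⟩ := id hasymp
  have ha n : 0 < a n := (mul_pos hc₁ (hτ n)).trans (hc n).1
  have hb n : 0 < b n := (ha n).trans (hgap n).2.1
  have hτb : τ =o[atTop] b := ((asymp_iff_isTheta hτ ha).1 hasymp).isLittleO_congr_left.2
    ((tendsto_sub_div_self_iff_isLittleO fun n => (hb n).ne').1 hratio)
  refine ⟨c₂ + 1, by linarith, fun K hK => eventually_atTop.1 ?_⟩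
  filter_upwards [(isLittleO_iff_forall_eventually_mul_le (fun n => (hτ n).le)
    (fun n => (hb n).le)).1 hτb K (by linarith)] with n hn
  have hak : a n ≤ (c₂ + 1) * τ n := by linarith [(hc n).2, hτ n]
  exact subset_eq_empty (inter_subset_inter_left E (Ioo_subset_Ioo hak hn)) (hgap n).2.2.1

lemma tauStronglyPorous_of_forall_gap {E : Set ℝ} (hE : E ⊆ Ici 0) {σ : ℕ → ℝ}
    (hσ : MemE0d E σ) {k : ℝ} (hk : 1 ≤ k)
    (hgap : ∀ n, Ioo (k * σ n) ((k + 1) * σ n) ∩ E = ∅)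
    (hup : ∀ n, (E ∩ Ici ((k + 1) * σ n)).Nonempty)
    (hK : ∀ K, k < K → ∀ᶠ n in atTop, Ioo (k * σ n) (K * σ n) ∩ E = ∅) :
    TauStronglyPorous E σ := by
  have hpos := hσ.pos hE
  obtain ⟨hdec, hmem, hlim⟩ := hσ
  set a : ℕ → ℝ := fun n => sSup (E ∩ Iic (k * σ n))
  set b : ℕ → ℝ := fun n => sInf (E ∩ Ici ((k + 1) * σ n))
  have hσk n : σ n ≤ k * σ n := le_mul_of_one_le_left (hpos n).le hk
  have hkk n : k * σ n < (k + 1) * σ n := by linarith [hpos n]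
  have hlow n : (E ∩ Iic (k * σ n)).Nonempty := ⟨σ n, (hmem n).1, hσk n⟩
  have hbdd n : BddAbove (E ∩ Iic (k * σ n)) := ⟨_, fun _ hx => hx.2⟩
  have ha_ge n : σ n ≤ a n := le_csSup (hbdd n) ⟨(hmem n).1, hσk n⟩
  have ha_le n : a n ≤ k * σ n := csSup_le (hlow n) fun _ hx => hx.2
  have hb_pos n : 0 < b n :=
    (hpos n).trans_le ((hσk n).trans ((hkk n).le.trans (le_csInf (hup n) fun _ hx => hx.2)))
  have hσb : σ =o[atTop] b := by
    refine (isLittleO_iff_forall_eventually_mul_le (fun n => (hpos n).le)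
      (fun n => (hb_pos n).le)).2 fun K _ => ?_
    filter_upwards [hK (max K (k + 1)) (lt_max_of_lt_right (lt_add_one k))] with n hn
    calc K * σ n ≤ max K (k + 1) * σ n := by gcongr; exacts [(hpos n).le, le_max_left _ _]
      _ ≤ b n := le_csInf_inter_Ici (hkk n) (hup n) hn
  have haσ : a =O[atTop] σ := IsBigO.of_bound k <| Eventually.of_forall fun n => by
    rw [Real.norm_of_nonneg ((hpos n).le.trans (ha_ge n)), Real.norm_of_nonneg (hpos n).le]
    exact ha_le n
  have hratio : Tendsto (fun n => (b n - a n) / b n) atTop (𝓝 1) :=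
    (tendsto_sub_div_self_iff_isLittleO fun n => (hb_pos n).ne').2 (haσ.trans_isLittleO hσb)
  refine ⟨a, b, ⟨fun n => isGapComponent_csSup_csInf hE (hkk n) (hlow n) (hup n) (hgap n),
    ?_, ?_, hratio⟩, 1 / 2, k + 1, by norm_num, by linarith, fun n => ⟨?_, ?_⟩⟩
  · filter_upwards [hdec] with n hn
    exact csSup_le_csSup (hbdd n) (hlow (n + 1))
      (inter_subset_inter_right _ (Iic_subset_Iic.2 (by gcongr)))
  · exact squeeze_zero (fun n => (hpos n).le.trans (ha_ge n)) ha_le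
      (by simpa using hlim.const_mul k)
  · linarith [ha_ge n, hpos n]
  · linarith [ha_le n, hkk n]

lemma tauStronglyPorous_of_exists_gap {E : Set ℝ} (hE : E ⊆ Ici 0) {τ : ℕ → ℝ}
    (hτ : MemE0d E τ) {k : ℝ} (hk : 1 ≤ k)
    (hK : ∀ K : ℝ, k < K → ∃ N₁ : ℕ, ∀ n, N₁ ≤ n → Ioo (k * τ n) (K * τ n) ∩ E = ∅) :
    TauStronglyPorous E τ := by
  have hpos := hτ.pos hE
  have hK' K (hkK : k < K) : ∀ᶠ n in atTop, Ioo (k * τ n) (K * τ n) ∩ E = ∅ :=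
    eventually_atTop.2 (hK K hkK)
  have hτk : Tendsto (fun n => (k + 1) * τ n) atTop (𝓝 0) := by
    simpa using hτ.2.2.const_mul (k + 1)
  have hsmall : ∀ᶠ n in atTop, (k + 1) * τ n ≤ τ 0 := hτk.eventually_le_const (hpos 0)
  obtain ⟨N, hN⟩ := eventually_atTop.1 ((hK' (k + 1) (lt_add_one k)).and hsmall)
  have hστ : (fun n => τ (max n N)) =ᶠ[atTop] τ := by
    filter_upwards [eventually_ge_atTop N] with n hn
    rw [max_eq_left hn]
  refine (tauStronglyPorous_of_forall_gap hE (hτ.comp_max N) hk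
    (fun n => (hN _ (le_max_right n N)).1)
    (fun n => ⟨τ 0, (hτ.2.1 0).1, (hN _ (le_max_right n N)).2⟩) fun K hkK => ?_).congr'
    (fun n => hpos _) hpos hστ
  filter_upwards [hK' K hkK, eventually_ge_atTop N] with n hn hNn
  rwa [max_eq_left hNn]

/-- Lemma 2.7. -/
theorem stmt17 (E : Set ℝ) (hE : E ⊆ Ici 0) (τ : ℕ → ℝ) (hτ : MemE0d E τ) :
    TauStronglyPorous E τ ↔
      ∃ k : ℝ, 1 < k ∧ ∀ K : ℝ, k < K → ∃ N₁ : ℕ, ∀ n, N₁ ≤ n →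
        Ioo (k * τ n) (K * τ n) ∩ E = ∅ :=
  ⟨TauStronglyPorous.exists_gap (hτ.pos hE),
    fun ⟨_, hk, hK⟩ => tauStronglyPorous_of_exists_gap hE hτ hk.le hK⟩
end
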